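/- arXiv:2504.07918 — 6 statements merged into one kernel-verified Lean document; each statement's English description precedes it below -/
import Mathlib

section
/- Let λ be a partition of n with at most m rows obtained as a rectangle-plus-hooks shape with parameters (p,q,r,s): the skew shape consisting of a p×q rectangle together with r extra boxes in a new column and s extra boxes in a new row, so that k = pq + r + s boxes total, with r ≤ p and s < q ≤ p. Then the sum of the (shifted) diagonal weights k + (1/2)k(p+q-2) + (1/2)r(p+q+3-r) + (1/2)s(p+q+1-s) is at least k + k(k-1)/(2q), provided (q-1)² ≥ r+s. -/
theorem rect_hook_key (p q r s : ℤ) (hq : 1 ≤ q) (hrp : r ≤ p) (hsq : s < q)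
    (hqp : q ≤ p) (hr : 0 ≤ r) (hs : 0 ≤ s) (hrs : (q - 1) ^ 2 ≥ r + s) :
    (p*q+r+s)*(p*q+r+s-1) ≤ q*((p*q+r+s)*(p+q-2)+r*(p+q+3-r)+s*(p+q+1-s)) := by
  have hq0 : (0:ℤ) ≤ q := by linarith
  nlinarith [mul_nonneg (mul_nonneg hq0 (by linarith : (0:ℤ) ≤ p)) (by linarith : (0:ℤ) ≤ (q-1)^2-(r+s)),
    mul_nonneg (mul_nonneg hq0 (by linarith : (0:ℤ) ≤ p)) hs,
    mul_nonneg (mul_nonneg hq0 hr) (by linarith : (0:ℤ) ≤ p - r),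
    mul_nonneg (by linarith : (0:ℤ) ≤ (q-1)^2-(r+s)) (by linarith : (0:ℤ) ≤ r + s),
    mul_nonneg (mul_nonneg hq0 hs) (by linarith : (0:ℤ) ≤ q - 1 - s),
    mul_nonneg (mul_nonneg hq0 hr) (by linarith : (0:ℤ) ≤ q + 3),
    mul_nonneg hq0 hs]

/-- Arithmetic inequality for the rectangle-plus-hooks shape with parameters
`(p,q,r,s)`: if `q ≥ 1`, `r ≤ p`, `s < q ≤ p`, `k = pq + r + s` and
`(q-1)² ≥ r + s`, then
`k + k(p+q-2)/2 + r(p+q+3-r)/2 + s(p+q+1-s)/2 ≥ k + k(k-1)/(2q)`. -/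
theorem rect_hook_bound (p q r s k : ℕ) (hq : 1 ≤ q) (hrp : r ≤ p) (hsq : s < q)
    (hqp : q ≤ p) (hk : k = p * q + r + s) (hrs : ((q : ℤ) - 1) ^ 2 ≥ (r : ℤ) + s) :
    (k : ℚ) + (k : ℚ) * ((p : ℚ) + q - 2) / 2 + (r : ℚ) * ((p : ℚ) + q + 3 - r) / 2
        + (s : ℚ) * ((p : ℚ) + q + 1 - s) / 2
      ≥ (k : ℚ) + (k : ℚ) * ((k : ℚ) - 1) / (2 * q) := by
  have hkey := rect_hook_key (p : ℤ) q r s (by exact_mod_cast hq) (by exact_mod_cast hrp)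
    (by exact_mod_cast hsq) (by exact_mod_cast hqp) (Int.ofNat_nonneg r) (Int.ofNat_nonneg s) hrs
  have hkQ : (k : ℚ) = (p : ℚ) * q + r + s := by exact_mod_cast hk
  have hkey' : (k : ℚ) * ((k : ℚ) - 1)
      ≤ (q : ℚ) * ((k : ℚ) * ((p : ℚ) + q - 2) + (r : ℚ) * ((p : ℚ) + q + 3 - r)
        + (s : ℚ) * ((p : ℚ) + q + 1 - s)) := by
    rw [hkQ]
    exact_mod_cast hkey
  have hq2 : (0:ℚ) < 2 * q := by positivity
  have hqne : (q:ℚ) ≠ 0 := by positivity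
  have h3 : (k : ℚ) * ((k : ℚ) - 1) / (2 * q)
      ≤ (q : ℚ) * ((k : ℚ) * ((p : ℚ) + q - 2) + (r : ℚ) * ((p : ℚ) + q + 3 - r)
        + (s : ℚ) * ((p : ℚ) + q + 1 - s)) / (2 * q) :=
    by gcongr
  have h5 : (q : ℚ) * ((k : ℚ) * ((p : ℚ) + q - 2) + (r : ℚ) * ((p : ℚ) + q + 3 - r)
        + (s : ℚ) * ((p : ℚ) + q + 1 - s)) / (2 * q)
      = (k : ℚ) * ((p : ℚ) + q - 2) / 2 + (r : ℚ) * ((p : ℚ) + q + 3 - r) / 2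
        + (s : ℚ) * ((p : ℚ) + q + 1 - s) / 2 := by
    field_simp
  linarith [h3, h5.symm.le, h5.le]
end

section
/- Let λ be a partition of n with λ₁ ≤ n. For any 1 ≤ k ≤ n, the minimal shifted k-diagonal index satisfies A ≥ k + C(k,2)·(λ₁-1)/(n-1), where A = Σ over the k boxes of λ containing labels n-k+1,…,n in the column-insertion tableau of (λ₁ - (j-i)). Equivalently, the maximal k-diagonal index D of any standard Young tableau of shape λ (D = sum of j-i over boxes labeled n-k+1,…,n) satisfies D ≤ k(λ₁-1) - C(k,2)(λ₁-1)/(n-1). -/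
/-- `S` is a standard Young tableau of shape `Y ⊢ n`: it maps the cells of `Y`
bijectively onto `{1,…,n}` and is strictly increasing along rows and columns
(cells are zero-indexed pairs `(i,j)`, row `i`, column `j`). -/
def IsSYT (Y : YoungDiagram) (S : ℕ × ℕ → ℕ) : Prop :=
  Set.BijOn S ↑Y.cells (Set.Icc 1 Y.card) ∧
    ∀ c ∈ Y.cells, ∀ d ∈ Y.cells, c.1 ≤ d.1 → c.2 ≤ d.2 → c ≠ d → S c < S d

/-- The `k`-diagonal index `D_S^k = Σ_{n-k < S(i,j) ≤ n} (j - i)`. -/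
def Dk (Y : YoungDiagram) (S : ℕ × ℕ → ℕ) (k : ℕ) : ℤ :=
  ∑ c ∈ Y.cells.filter (fun c => Y.card - k < S c), ((c.2 : ℤ) - (c.1 : ℤ))

/-- The row-insertion tableau: fill `1,…,n` row by row, left to right, from the top. -/
def rowIns (Y : YoungDiagram) (c : ℕ × ℕ) : ℕ :=
  (∑ i ∈ Finset.range c.1, Y.rowLen i) + c.2 + 1

/-- The column-insertion tableau: fill `1,…,n` column by column, top to bottom,
from the leftmost column. -/
def colIns (Y : YoungDiagram) (c : ℕ × ℕ) : ℕ :=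
  (∑ j ∈ Finset.range c.2, Y.colLen j) + c.1 + 1



open Finset

lemma row_decomp (Y : YoungDiagram) (p : ℕ × ℕ → Prop) [DecidablePred p] :
    Y.cells.filter p =
      (range (Y.colLen 0)).biUnion
        (fun i => ((range (Y.rowLen i)).filter (fun j => p (i, j))).image (fun j => (i, j))) := by
  ext ⟨i, j⟩
  simp only [mem_filter, YoungDiagram.mem_cells, mem_biUnion, mem_image, mem_range]
  constructor
  · rintro ⟨hm, hp⟩
    refine ⟨i, ?_, j, ⟨⟨(YoungDiagram.mem_iff_lt_rowLen).mp hm, hp⟩, rfl⟩⟩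
    have : (i, 0) ∈ Y := Y.up_left_mem le_rfl (Nat.zero_le _) hm
    exact (YoungDiagram.mem_iff_lt_colLen).mp this
  · rintro ⟨i', _, j', ⟨⟨hj', hp⟩, h⟩⟩
    obtain ⟨rfl, rfl⟩ : i' = i ∧ j' = j := by simpa [Prod.ext_iff] using h
    exact ⟨(YoungDiagram.mem_iff_lt_rowLen).mpr hj', hp⟩

lemma row_decomp_card (Y : YoungDiagram) (p : ℕ × ℕ → Prop) [DecidablePred p] :
    (Y.cells.filter p).card =
      ∑ i ∈ range (Y.colLen 0), ((range (Y.rowLen i)).filter (fun j => p (i, j))).card := by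
  rw [row_decomp, Finset.card_biUnion]
  · refine Finset.sum_congr rfl fun i _ => ?_
    exact Finset.card_image_of_injective _ (fun a b h => by simpa using h)
  · intro a _ b _ hab
    simp only [Finset.disjoint_left, mem_image]
    rintro x ⟨j, _, rfl⟩ ⟨j', _, h⟩
    have : a = b := by
      have h2 := h.symm
      simp [Prod.ext_iff] at h2
      exact h2.1
    exact hab this

lemma card_eq_sum_rowLens' (Y : YoungDiagram) :
    Y.card = ∑ i ∈ range (Y.colLen 0), Y.rowLen i := by
  have := row_decomp_card Y (fun _ => True)
  simpa using this

lemma row_count (L i : ℕ) (c : ℤ) (hc : 0 ≤ c) :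
    ((range L).filter (fun (j:ℕ) => (j:ℤ) - (i:ℤ) < c)).card = min L (c + i).toNat := by
  have h : (range L).filter (fun (j:ℕ) => (j:ℤ) - (i:ℤ) < c) = range (min L (c+i).toNat) := by
    ext j
    simp only [mem_filter, mem_range, lt_min_iff]
    constructor
    · rintro ⟨h1, h2⟩
      refine ⟨h1, ?_⟩
      rw [Int.lt_toNat]; push_cast; linarith
    · rintro ⟨h1, h2⟩
      rw [Int.lt_toNat] at h2
      exact ⟨h1, by push_cast at h2 ⊢; linarith⟩
  rw [h, Finset.card_range]

lemma lemC (Y : YoungDiagram) (c : ℤ) (hc1 : 1 ≤ c) (hc2 : c ≤ (Y.rowLen 0 : ℤ) - 1) :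
    c * ((Y.card : ℤ) - 1) ≤ ((Y.rowLen 0 : ℤ) - 1) *
      ((Y.cells.filter (fun x => (x.2:ℤ) - (x.1:ℤ) < c)).card : ℤ) := by
  set R := Y.colLen 0 with hR
  have hr2 : 2 ≤ Y.rowLen 0 := by exact_mod_cast (by linarith : (2:ℤ) ≤ (Y.rowLen 0 : ℤ))
  have hzero : (0,0) ∈ Y := by
    rw [YoungDiagram.mem_iff_lt_rowLen]
    omega
  have hRpos : 0 < R := by
    rw [hR, ← YoungDiagram.mem_iff_lt_colLen]
    exact hzero
  have hM : ((Y.cells.filter (fun x => (x.2:ℤ) - (x.1:ℤ) < c)).card : ℤ)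
      = ∑ i ∈ range R, min (Y.rowLen i : ℤ) (c + i) := by
    rw [row_decomp_card Y (fun x => (x.2:ℤ) - (x.1:ℤ) < c)]
    push_cast
    refine Finset.sum_congr rfl fun i _ => ?_
    rw [row_count (Y.rowLen i) i c (by linarith)]
    rw [Nat.cast_min, Int.toNat_of_nonneg (by positivity : (0:ℤ) ≤ c + (i:ℤ))]
  have hcard : (Y.card : ℤ) = ∑ i ∈ range R, (Y.rowLen i : ℤ) := by
    rw [card_eq_sum_rowLens' Y]; push_cast; rfl
  rw [hM, hcard]
  rw [Finset.range_eq_Ico, Finset.sum_eq_sum_Ico_succ_bot hRpos,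
    Finset.sum_eq_sum_Ico_succ_bot hRpos]
  have hmin0 : min ((Y.rowLen 0 : ℕ) : ℤ) (c + ((0:ℕ):ℤ)) = c := by
    simp only [Nat.cast_zero, add_zero]
    exact min_eq_right (by linarith)
  rw [hmin0]
  have hsum : ∑ i ∈ Finset.Ico 1 R, c * (Y.rowLen i : ℤ)
      ≤ ∑ i ∈ Finset.Ico 1 R, ((Y.rowLen 0 : ℤ) - 1) * min (Y.rowLen i : ℤ) (c + i) := by
    refine Finset.sum_le_sum fun i hi => ?_
    have hi1 : (1:ℤ) ≤ (i:ℤ) := by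
      have := (Finset.mem_Ico.mp hi).1
      exact_mod_cast this
    have hle : (Y.rowLen i : ℤ) ≤ (Y.rowLen 0 : ℤ) := by
      exact_mod_cast Y.rowLen_anti 0 i (Nat.zero_le i)
    have hnn : (0:ℤ) ≤ (Y.rowLen i : ℤ) := by positivity
    rcases le_total ((Y.rowLen i : ℤ)) (c + i) with h | h
    · rw [min_eq_left h]; nlinarith
    · rw [min_eq_right h]; nlinarith
  rw [← Finset.mul_sum, ← Finset.mul_sum] at hsum
  nlinarith [hsum]

lemma lemA (Y : YoungDiagram) (F : Finset (ℕ × ℕ)) :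
    F ⊆ Y.cells →
    ((Y.card : ℤ) - 1) * (∑ x ∈ F, ((x.2:ℤ) - (x.1:ℤ))) ≤
      ((Y.rowLen 0 : ℤ) - 1) * ∑ s ∈ range F.card, ((Y.card : ℤ) - 1 - (s:ℤ)) := by
  induction F using Finset.strongInduction with
  | _ F ih =>
    intro hF
    rcases F.eq_empty_or_nonempty with rfl | hne
    · simp
    obtain ⟨x₀, hx₀F, hmin⟩ := F.exists_min_image (fun x => (x.2:ℤ) - (x.1:ℤ)) hne
    have hx₀Y : x₀ ∈ Y.cells := hF hx₀F
    set c₀ : ℤ := (x₀.2:ℤ) - (x₀.1:ℤ) with hc₀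
    have hKpos : 0 < F.card := Finset.card_pos.mpr hne
    have hKle : F.card ≤ Y.card := Finset.card_le_card hF
    have hnpos : 1 ≤ Y.card := Finset.card_pos.mpr ⟨x₀, hx₀Y⟩
    have hx₀mem : (x₀.1, x₀.2) ∈ Y := by
      rw [← YoungDiagram.mem_cells]; simpa using hx₀Y
    have hzero : (0,0) ∈ Y := Y.up_left_mem (Nat.zero_le _) (Nat.zero_le _) hx₀mem
    have hl1 : 1 ≤ Y.rowLen 0 := YoungDiagram.mem_iff_lt_rowLen.mp hzero
    have hl1' : (1:ℤ) ≤ (Y.rowLen 0 : ℤ) := by exact_mod_cast hl1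
    have hn1 : (1:ℤ) ≤ (Y.card : ℤ) := by exact_mod_cast hnpos
    have hKle' : (F.card : ℤ) ≤ (Y.card : ℤ) := by exact_mod_cast hKle
    have key : ((Y.card:ℤ) - 1) * c₀ ≤ ((Y.rowLen 0:ℤ) - 1) * ((Y.card:ℤ) - F.card) := by
      rcases le_or_gt c₀ 0 with h0 | h0
      · nlinarith
      · have hc1 : 1 ≤ c₀ := h0
        have hc2 : c₀ ≤ (Y.rowLen 0 : ℤ) - 1 := by
          have h1 : x₀.2 < Y.rowLen x₀.1 := YoungDiagram.mem_iff_lt_rowLen.mp hx₀mem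
          have h2 : Y.rowLen x₀.1 ≤ Y.rowLen 0 := Y.rowLen_anti 0 x₀.1 (Nat.zero_le _)
          have h3 : (x₀.2:ℤ) < (Y.rowLen 0:ℤ) := by exact_mod_cast lt_of_lt_of_le h1 h2
          have h4 : (0:ℤ) ≤ (x₀.1:ℤ) := by positivity
          omega
        have hC := lemC Y c₀ hc1 hc2
        have hsub : F ⊆ Y.cells.filter (fun x => ¬ ((x.2:ℤ) - (x.1:ℤ) < c₀)) := by
          intro y hy
          rw [Finset.mem_filter]
          exact ⟨hF hy, not_lt.mpr (hmin y hy)⟩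
        have hNle : F.card ≤ (Y.cells.filter (fun x => ¬ ((x.2:ℤ) - (x.1:ℤ) < c₀))).card :=
          Finset.card_le_card hsub
        have hpart := Finset.card_filter_add_card_filter_not
          (s := Y.cells) (p := fun x => (x.2:ℤ) - (x.1:ℤ) < c₀)
        have hcc : Y.cells.card = Y.card := rfl
        have hM : ((Y.cells.filter (fun x => (x.2:ℤ) - (x.1:ℤ) < c₀)).card : ℤ)
            ≤ (Y.card:ℤ) - F.card := by
          have h5 : (Y.cells.filter (fun x => (x.2:ℤ) - (x.1:ℤ) < c₀)).card + F.card
              ≤ Y.card := by omega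
          push_cast at h5
          linarith
        have h6 := mul_le_mul_of_nonneg_left hM (by linarith : (0:ℤ) ≤ (Y.rowLen 0:ℤ) - 1)
        linarith
    have hsplit : ∑ x ∈ F.erase x₀, ((x.2:ℤ) - (x.1:ℤ)) + c₀ = ∑ x ∈ F, ((x.2:ℤ) - (x.1:ℤ)) :=
      Finset.sum_erase_add F _ hx₀F
    have ihe := ih (F.erase x₀) (Finset.erase_ssubset hx₀F)
      ((Finset.erase_subset _ _).trans hF)
    obtain ⟨K', hK'⟩ : ∃ K', F.card = K' + 1 := ⟨F.card - 1, by omega⟩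
    have hcard' : (F.erase x₀).card = K' := by
      rw [Finset.card_erase_of_mem hx₀F, hK']; omega
    rw [hcard'] at ihe
    rw [hK', Finset.sum_range_succ]
    have hgK : ((Y.card:ℤ) - 1 - (K':ℤ)) = (Y.card:ℤ) - (F.card:ℤ) := by
      rw [hK']; push_cast; ring
    rw [← hsplit, hgK]
    nlinarith [ihe, key]

lemma card_transpose (Y : YoungDiagram) : Y.transpose.card = Y.card := by
  simp [YoungDiagram.transpose, YoungDiagram.card]

lemma card_eq_sum_colLens (Y : YoungDiagram) :
    Y.card = ∑ j ∈ range (Y.rowLen 0), Y.colLen j := by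
  have h := card_eq_sum_rowLens' Y.transpose
  rw [card_transpose, YoungDiagram.colLen_transpose] at h
  simpa [YoungDiagram.rowLen_transpose] using h

lemma partial_col_le (Y : YoungDiagram) {i j : ℕ} (h : (i, j) ∈ Y) :
    (∑ j' ∈ range j, Y.colLen j') + i + 1 ≤ ∑ j' ∈ range (j+1), Y.colLen j' := by
  rw [Finset.sum_range_succ]
  have : i + 1 ≤ Y.colLen j := YoungDiagram.mem_iff_lt_colLen.mp h
  omega

lemma colIns_le (Y : YoungDiagram) {c : ℕ × ℕ} (hc : c ∈ Y.cells) : colIns Y c ≤ Y.card := by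
  obtain ⟨i, j⟩ := c
  have hm : (i, j) ∈ Y := by rw [← YoungDiagram.mem_cells]; exact hc
  have h1 := partial_col_le Y hm
  have hj : j + 1 ≤ Y.rowLen 0 := by
    have : (0, j) ∈ Y := Y.up_left_mem (Nat.zero_le _) le_rfl hm
    exact YoungDiagram.mem_iff_lt_rowLen.mp this
  have h2 : ∑ j' ∈ range (j+1), Y.colLen j' ≤ ∑ j' ∈ range (Y.rowLen 0), Y.colLen j' :=
    Finset.sum_le_sum_of_subset (Finset.range_subset_range.mpr hj)
  rw [card_eq_sum_colLens]
  calc colIns Y (i, j) = (∑ j' ∈ range j, Y.colLen j') + i + 1 := rfl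
    _ ≤ _ := h1.trans h2

lemma colIns_lt_of_col_lt (Y : YoungDiagram) {a b : ℕ × ℕ} (ha : a ∈ Y.cells)
    (hab : a.2 < b.2) : colIns Y a < colIns Y b := by
  have hm : (a.1, a.2) ∈ Y := by rw [← YoungDiagram.mem_cells]; simpa using ha
  have h1 := partial_col_le Y hm
  have h2 : ∑ j' ∈ range (a.2+1), Y.colLen j' ≤ ∑ j' ∈ range b.2, Y.colLen j' :=
    Finset.sum_le_sum_of_subset (Finset.range_subset_range.mpr hab)
  calc colIns Y a = (∑ j' ∈ range a.2, Y.colLen j') + a.1 + 1 := rfl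
    _ ≤ ∑ j' ∈ range b.2, Y.colLen j' := h1.trans h2
    _ < colIns Y b := by unfold colIns; omega

lemma colIns_injOn (Y : YoungDiagram) : Set.InjOn (colIns Y) ↑Y.cells := by
  intro a ha b hb h
  have ha' : a ∈ Y.cells := ha
  have hb' : b ∈ Y.cells := hb
  rcases lt_trichotomy a.2 b.2 with hlt | heq | hgt
  · exact absurd h (colIns_lt_of_col_lt Y ha' hlt).ne
  · have : a.1 = b.1 := by
      unfold colIns at h
      rw [heq] at h
      omega
    exact Prod.ext this heq
  · exact absurd h.symm (colIns_lt_of_col_lt Y hb' hgt).ne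

lemma sum_range_id_choose (k : ℕ) : ∑ s ∈ range k, s = k.choose 2 := by
  induction k with
  | zero => simp
  | succ m ihm =>
    rw [Finset.sum_range_succ, ihm, Nat.choose_succ_succ]
    simp [Nat.choose_one_right]
    omega

lemma master (Y : YoungDiagram) (n k : ℕ) (hY : Y.card = n) (hk1 : 1 ≤ k) (hkn : k ≤ n)
    (S : ℕ × ℕ → ℕ) (hinj : Set.InjOn S ↑Y.cells)
    (hb : ∀ c ∈ Y.cells, 1 ≤ S c ∧ S c ≤ n) :
    (Dk Y S k : ℚ) ≤ (k : ℚ) * ((Y.rowLen 0 : ℚ) - 1)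
      - (k.choose 2 : ℚ) * ((Y.rowLen 0 : ℚ) - 1) / ((n : ℚ) - 1) := by
  set F := Y.cells.filter (fun c => Y.card - k < S c) with hFdef
  have hFsub : F ⊆ Y.cells := Finset.filter_subset _ _
  have hnpos : 1 ≤ n := hk1.trans hkn
  have hcc : Y.cells.card = n := hY
  have hne : Y.cells.Nonempty := Finset.card_pos.mp (by omega)
  obtain ⟨x, hx⟩ := hne
  have hxY : (x.1, x.2) ∈ Y := by rw [← YoungDiagram.mem_cells]; simpa using hx
  have hzero : (0,0) ∈ Y := Y.up_left_mem (Nat.zero_le _) (Nat.zero_le _) hxY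
  have hl1 : 1 ≤ Y.rowLen 0 := YoungDiagram.mem_iff_lt_rowLen.mp hzero
  have hl1' : (1:ℚ) ≤ (Y.rowLen 0 : ℚ) := by exact_mod_cast hl1
  -- F.card ≤ k
  have hFk : F.card ≤ k := by
    have h := Finset.card_le_card_of_injOn (f := S) (s := F) (t := Finset.Icc (n-k+1) n)
      (fun a ha => by
        rw [hFdef, Finset.mem_coe, Finset.mem_filter, hY] at ha
        obtain ⟨haY, haS⟩ := ha
        rw [Finset.mem_coe, Finset.mem_Icc]
        exact ⟨by omega, (hb a haY).2⟩)
      (hinj.mono (Finset.coe_subset.mpr hFsub))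
    rwa [Nat.card_Icc, (by omega : n + 1 - (n - k + 1) = k)] at h
  -- content bound per cell
  have hcont : ∀ x ∈ F, ((x.2:ℤ) - (x.1:ℤ)) ≤ (Y.rowLen 0 : ℤ) - 1 := by
    intro y hy
    have hyY : (y.1, y.2) ∈ Y := by rw [← YoungDiagram.mem_cells]; simpa using hFsub hy
    have h1 : y.2 < Y.rowLen y.1 := YoungDiagram.mem_iff_lt_rowLen.mp hyY
    have h2 : Y.rowLen y.1 ≤ Y.rowLen 0 := Y.rowLen_anti 0 y.1 (Nat.zero_le _)
    have h3 : (y.2:ℤ) < (Y.rowLen 0:ℤ) := by exact_mod_cast lt_of_lt_of_le h1 h2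
    have h4 : (0:ℤ) ≤ (y.1:ℤ) := by positivity
    omega
  have hDdef : Dk Y S k = ∑ x ∈ F, ((x.2:ℤ) - (x.1:ℤ)) := rfl
  rcases eq_or_lt_of_le hnpos with h1 | hn2
  · -- n = 1, so k = 1, choose 2 = 0
    have hk : k = 1 := by omega
    have hch : k.choose 2 = 0 := by rw [hk]; rfl
    rw [hch]
    simp only [Nat.cast_zero, zero_mul, zero_div, sub_zero]
    have hD : (Dk Y S k : ℤ) ≤ (k:ℤ) * ((Y.rowLen 0 : ℤ) - 1) := by
      rw [hDdef]
      calc ∑ x ∈ F, ((x.2:ℤ) - (x.1:ℤ)) ≤ ∑ _x ∈ F, ((Y.rowLen 0 : ℤ) - 1) :=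
            Finset.sum_le_sum hcont
        _ = F.card * ((Y.rowLen 0 : ℤ) - 1) := by rw [Finset.sum_const, nsmul_eq_mul]
        _ ≤ (k:ℤ) * ((Y.rowLen 0 : ℤ) - 1) := by
            have : (F.card : ℤ) ≤ (k:ℤ) := by exact_mod_cast hFk
            have h0 : (0:ℤ) ≤ (Y.rowLen 0 : ℤ) - 1 := by
              have : (1:ℤ) ≤ (Y.rowLen 0 : ℤ) := by exact_mod_cast hl1
              linarith
            exact mul_le_mul_of_nonneg_right this h0
    exact_mod_cast hD
  · -- n ≥ 2
    have hA := lemA Y F hFsub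
    rw [hY, ← hDdef] at hA
    have hext : ∑ s ∈ range F.card, ((n : ℤ) - 1 - (s:ℤ))
        ≤ ∑ s ∈ range k, ((n : ℤ) - 1 - (s:ℤ)) := by
      apply Finset.sum_le_sum_of_subset_of_nonneg (Finset.range_subset_range.mpr hFk)
      intro s hs _
      have : s < k := Finset.mem_range.mp hs
      have : (s:ℤ) ≤ (n:ℤ) - 1 := by
        have : s ≤ n - 1 := by omega
        omega
      omega
    have hl0 : (0:ℤ) ≤ (Y.rowLen 0 : ℤ) - 1 := by
      have : (1:ℤ) ≤ (Y.rowLen 0 : ℤ) := by exact_mod_cast hl1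
      linarith
    have hB : ((n : ℤ) - 1) * Dk Y S k
        ≤ ((Y.rowLen 0 : ℤ) - 1) * ∑ s ∈ range k, ((n : ℤ) - 1 - (s:ℤ)) :=
      hA.trans (mul_le_mul_of_nonneg_left hext hl0)
    have hsum : ∑ s ∈ range k, ((n : ℤ) - 1 - (s:ℤ)) = k * ((n:ℤ) - 1) - (k.choose 2 : ℤ) := by
      rw [Finset.sum_sub_distrib, Finset.sum_const, Finset.card_range, nsmul_eq_mul]
      have : ∑ s ∈ range k, (s:ℤ) = (k.choose 2 : ℤ) := by
        rw [← Nat.cast_sum]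
        exact_mod_cast congrArg (Nat.cast : ℕ → ℤ) (sum_range_id_choose k)
      rw [this]
    rw [hsum] at hB
    -- move to ℚ
    have hBQ : ((n : ℚ) - 1) * (Dk Y S k : ℚ)
        ≤ ((Y.rowLen 0 : ℚ) - 1) * ((k:ℚ) * ((n:ℚ) - 1) - (k.choose 2 : ℚ)) := by
      exact_mod_cast hB
    have hpos : (0:ℚ) < (n:ℚ) - 1 := by
      have : (2:ℚ) ≤ (n:ℚ) := by exact_mod_cast hn2
      linarith
    have hgoal_eq : (k : ℚ) * ((Y.rowLen 0 : ℚ) - 1)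
          - (k.choose 2 : ℚ) * ((Y.rowLen 0 : ℚ) - 1) / ((n : ℚ) - 1)
        = (((Y.rowLen 0 : ℚ) - 1) * ((k:ℚ) * ((n:ℚ) - 1) - (k.choose 2 : ℚ))) / ((n : ℚ) - 1) := by
      field_simp
    rw [hgoal_eq, le_div_iff₀ hpos]
    nlinarith [hBQ]

/-- The minimal shifted `k`-diagonal index `A = kλ₁ - D_{λ↓}^k` (attained by the
column-insertion tableau) satisfies `A ≥ k + C(k,2)(λ₁-1)/(n-1)`; equivalently,
the `k`-diagonal index of any standard Young tableau of shape `λ` satisfies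
`D_S^k ≤ k(λ₁-1) - C(k,2)(λ₁-1)/(n-1)`. -/
theorem shifted_k_diag_lower_bound (Y : YoungDiagram) (n k : ℕ) (hY : Y.card = n)
    (hk1 : 1 ≤ k) (hkn : k ≤ n) :
    ((k : ℚ) * (Y.rowLen 0 : ℚ) - (Dk Y (colIns Y) k : ℚ)
        ≥ (k : ℚ) + (k.choose 2 : ℚ) * ((Y.rowLen 0 : ℚ) - 1) / ((n : ℚ) - 1)) ∧
      ∀ S : ℕ × ℕ → ℕ, IsSYT Y S →
        (Dk Y S k : ℚ) ≤ (k : ℚ) * ((Y.rowLen 0 : ℚ) - 1)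
          - (k.choose 2 : ℚ) * ((Y.rowLen 0 : ℚ) - 1) / ((n : ℚ) - 1) := by
  have hmaster := master Y n k hY hk1 hkn
  constructor
  · have h := hmaster (colIns Y) (colIns_injOn Y)
      (fun c hc => ⟨by unfold colIns; omega, by rw [← hY]; exact colIns_le Y hc⟩)
    linarith [h]
  · intro S hS
    refine hmaster S hS.1.injOn (fun c hc => ?_)
    have h2 := hS.1.mapsTo (Finset.mem_coe.mpr hc)
    rw [Set.mem_Icc] at h2
    exact ⟨h2.1, by rw [← hY]; exact h2.2⟩
end

section
/- Among all standard Young tableaux S of shape λ ⊢ n, the k-diagonal index D_S^k = Σ_{n-k < S(i,j) ≤ n} (j - i) is maximized by the column-insertion tableau and minimized by the row-insertion tableau. -/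
namespace DkAux
open Finset

/-- A downward-closed finite set of naturals is an initial segment. -/
lemma dc_eq_range (s : Finset ℕ) (h : ∀ j ∈ s, ∀ j' ≤ j, j' ∈ s) : s = range s.card := by
  have hlt : ∀ j ∈ s, j < s.card := by
    intro j hj
    have hsub : range (j + 1) ⊆ s := fun j' hj' => h j hj j' (by simpa using Nat.lt_succ_iff.mp (mem_range.mp hj'))
    have := Finset.card_le_card hsub
    simp only [card_range] at this
    omega
  apply Finset.eq_of_subset_of_card_le
  · intro j hj; exact mem_range.mpr (hlt j hj)
  · simp

lemma fst_lt_card {Y : YoungDiagram} {c : ℕ × ℕ} (hc : c ∈ Y.cells) : c.1 < Y.card := by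
  have hsub : (range (c.1 + 1)).image (fun i => (i, c.2)) ⊆ Y.cells := by
    intro d hd
    simp only [mem_image, mem_range] at hd
    obtain ⟨i, hi, rfl⟩ := hd
    exact Y.up_left_mem (by omega) le_rfl hc
  have hcard := Finset.card_le_card hsub
  rwa [Finset.card_image_of_injective _ (fun a b hab => by simpa using hab), card_range,
    Nat.succ_le_iff] at hcard

lemma rowLen_le_card (Y : YoungDiagram) (i : ℕ) : Y.rowLen i ≤ Y.card := by
  rw [YoungDiagram.rowLen_eq_card]
  exact Finset.card_le_card (Finset.filter_subset _ _)

lemma sum_rowLen (Y : YoungDiagram) {N : ℕ} (hN : ∀ c ∈ Y.cells, c.1 < N) :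
    ∑ i ∈ range N, Y.rowLen i = Y.card := by
  show _ = Y.cells.card
  rw [Finset.card_eq_sum_card_fiberwise (f := Prod.fst) (t := range N)
    (fun c hc => mem_range.mpr (hN c hc))]
  apply Finset.sum_congr rfl
  intro i _
  rw [YoungDiagram.rowLen_eq_card]
  rfl


section Cnt

variable (Y : YoungDiagram) (m : ℕ) (T : ℕ × ℕ → ℕ)

/-- number of cells in row `i` with label `≤ m`. -/
def cnt (i : ℕ) : ℕ := ((Y.cells.filter fun c => T c ≤ m).filter fun c => c.1 = i).card

variable (hT : ∀ i j j', (i, j) ∈ Y → j' ≤ j → T (i, j') ≤ T (i, j))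

include hT

lemma cnt_char (i j : ℕ) : ((i, j) ∈ Y ∧ T (i, j) ≤ m) ↔ j < cnt Y m T i := by
  classical
  set s : Finset ℕ := ((Y.cells.filter fun c => T c ≤ m).filter fun c => c.1 = i).image Prod.snd
    with hs
  have hmem : ∀ j, j ∈ s ↔ ((i, j) ∈ Y ∧ T (i, j) ≤ m) := by
    intro j
    simp only [hs, mem_image, mem_filter, YoungDiagram.mem_cells]
    constructor
    · rintro ⟨⟨x, y⟩, ⟨⟨hY, hTm⟩, hx⟩, hy⟩
      cases hx; cases hy; exact ⟨hY, hTm⟩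
    · rintro ⟨hY, hTm⟩; exact ⟨(i, j), ⟨⟨hY, hTm⟩, rfl⟩, rfl⟩
  have hdc : s = range s.card := by
    apply dc_eq_range
    intro j hj j' hj'
    rw [hmem] at hj ⊢
    exact ⟨Y.up_left_mem le_rfl hj' hj.1, le_trans (hT i j j' hj.1 hj') hj.2⟩
  have hcard : s.card = cnt Y m T i := by
    rw [hs, Finset.card_image_of_injOn]
    · rfl
    · intro c hc d hd hcd
      simp only [mem_coe, mem_filter] at hc hd
      exact Prod.ext (hc.2.trans hd.2.symm) hcd
  rw [← hcard, ← mem_range, ← hdc, hmem]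

lemma cnt_le_rowLen (i : ℕ) : cnt Y m T i ≤ Y.rowLen i := by
  by_cases h : cnt Y m T i = 0
  · omega
  · have := (cnt_char Y m T hT i (cnt Y m T i - 1)).mpr (by omega)
    rw [YoungDiagram.mem_iff_lt_rowLen] at this
    omega

lemma row_filter_eq (i : ℕ) :
    ((Y.cells.filter fun c => T c ≤ m).filter fun c => c.1 = i)
      = (range (cnt Y m T i)).image fun j => (i, j) := by
  ext ⟨x, y⟩
  simp only [mem_filter, mem_image, mem_range, YoungDiagram.mem_cells]
  constructor
  · rintro ⟨⟨hY, hTm⟩, rfl⟩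
    exact ⟨y, (cnt_char Y m T hT x y).mp ⟨hY, hTm⟩, rfl⟩
  · rintro ⟨j, hj, hij⟩
    have hx : i = x := congrArg Prod.fst hij
    have hy : j = y := congrArg Prod.snd hij
    subst hx; subst hy
    have := (cnt_char Y m T hT i j).mpr hj
    exact ⟨⟨this.1, this.2⟩, rfl⟩

omit hT in
lemma sum_cnt {N : ℕ} (hN : ∀ c ∈ Y.cells, c.1 < N) :
    ∑ i ∈ range N, cnt Y m T i = (Y.cells.filter fun c => T c ≤ m).card := by
  rw [Finset.card_eq_sum_card_fiberwise (f := Prod.fst) (t := range N)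
    (fun c hc => mem_range.mpr (hN c (Finset.filter_subset _ _ hc)))]
  rfl

lemma sum_g :
    ∑ c ∈ Y.cells.filter (fun c => T c ≤ m), ((c.2 : ℤ) - (c.1 : ℤ))
      = ∑ i ∈ range (Y.card + 1),
          ((∑ j ∈ range (cnt Y m T i), (j : ℤ)) - (i : ℤ) * (cnt Y m T i : ℤ)) := by
  rw [← Finset.sum_fiberwise_of_maps_to (g := Prod.fst) (t := range (Y.card + 1))
    (fun c hc => mem_range.mpr (by
      have := fst_lt_card (Finset.filter_subset _ _ hc); omega))
    (fun c : ℕ × ℕ => ((c.2 : ℤ) - (c.1 : ℤ)))]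
  apply Finset.sum_congr rfl
  intro i _
  have : (Y.cells.filter fun c => T c ≤ m).filter (fun c => c.1 = i)
      = (range (cnt Y m T i)).image fun j => (i, j) := row_filter_eq Y m T hT i
  rw [show ((Y.cells.filter fun c => T c ≤ m).filter fun c => Prod.fst c = i)
      = (range (cnt Y m T i)).image (fun j => (i, j)) from this]
  rw [Finset.sum_image (by intro a _ b _ h; simpa using h)]
  simp only []
  rw [Finset.sum_sub_distrib, Finset.sum_const, card_range]
  simp [mul_comm]

end Cnt

section Arith

/-- prefix sums of the greedy row filling. -/
lemma greedy_prefix (l : ℕ → ℕ) (m : ℕ) (k : ℕ) :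
    ∑ i ∈ range k, min (l i) (m - ∑ i' ∈ range i, l i') = min (∑ i ∈ range k, l i) m := by
  induction k with
  | zero => simp
  | succ k ih => rw [Finset.sum_range_succ, Finset.sum_range_succ, ih]; omega

/-- Claim 2: the greedy filling has, columnwise, the fewest cells in any initial
set of columns. -/
lemma claim2 (N s : ℕ) (a r : ℕ → ℕ)
    (hanti : ∀ i i', i ≤ i' → a i' ≤ a i)
    (htot : ∑ i ∈ range N, a i = ∑ i ∈ range N, r i)
    (hpre : ∀ k, k ≤ N → ∑ i ∈ range k, a i ≤ ∑ i ∈ range k, r i) :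
    ∑ i ∈ range N, min (r i) s ≤ ∑ i ∈ range N, min (a i) s := by
  classical
  set F := (range N).filter (fun i => s ≤ a i) with hF
  have hdc : F = range F.card := by
    apply dc_eq_range
    intro i hi i' hi'
    simp only [hF, mem_filter, mem_range] at hi ⊢
    exact ⟨by omega, le_trans hi.2 (hanti i' i hi')⟩
  set k₀ := F.card with hk0
  have hk0N : k₀ ≤ N := by
    have := Finset.card_le_card (Finset.filter_subset (fun i => s ≤ a i) (range N))
    simpa using this
  have hmemF : ∀ i, i ∈ F ↔ i < k₀ := by
    intro i; rw [hdc]; simp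
  have hsplit : ∀ x : ℕ → ℕ, ∑ i ∈ range N, x i
      = ∑ i ∈ range k₀, x i + ∑ i ∈ Ico k₀ N, x i := by
    intro x
    rw [Finset.range_eq_Ico, ← Finset.sum_Ico_consecutive _ (Nat.zero_le k₀) hk0N, ← Finset.range_eq_Ico]
  have ha_lo : ∀ i ∈ range k₀, min (a i) s = s := by
    intro i hi
    have : i ∈ F := (hmemF i).mpr (mem_range.mp hi)
    simp only [hF, mem_filter] at this
    omega
  have ha_hi : ∀ i ∈ Ico k₀ N, min (a i) s = a i := by
    intro i hi
    rw [mem_Ico] at hi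
    have : i ∉ F := fun h => by have := (hmemF i).mp h; omega
    simp only [hF, mem_filter, mem_range] at this
    have : a i < s := by
      by_contra h
      exact this ⟨hi.2, by omega⟩
    omega
  have hA : ∑ i ∈ range N, min (a i) s = s * k₀ + ∑ i ∈ Ico k₀ N, a i := by
    rw [hsplit (fun i => min (a i) s), Finset.sum_congr rfl ha_lo,
      Finset.sum_congr rfl ha_hi, Finset.sum_const, card_range, smul_eq_mul, mul_comm]
  have hR : ∑ i ∈ range N, min (r i) s ≤ s * k₀ + ∑ i ∈ Ico k₀ N, r i := by
    rw [hsplit (fun i => min (r i) s)]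
    gcongr ?_ + ?_
    · calc ∑ i ∈ range k₀, min (r i) s ≤ ∑ _i ∈ range k₀, s :=
            Finset.sum_le_sum (fun i _ => min_le_right _ _)
      _ = s * k₀ := by rw [Finset.sum_const, card_range, smul_eq_mul, mul_comm]
    · exact Finset.sum_le_sum (fun i _ => min_le_left _ _)
  have hIco : ∑ i ∈ Ico k₀ N, r i ≤ ∑ i ∈ Ico k₀ N, a i := by
    have h1 := hsplit a
    have h2 := hsplit r
    have h3 := hpre k₀ hk0N
    omega
  omega


lemma min_split (x T : ℕ) (hx : x ≤ T) :
    ∑ t ∈ range T, min x (t + 1) = (∑ t ∈ range x, (t + 1)) + (T - x) * x := by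
  rw [Finset.range_eq_Ico, ← Finset.sum_Ico_consecutive _ (Nat.zero_le x) hx]
  rw [← Finset.range_eq_Ico]
  congr 1
  · exact Finset.sum_congr rfl (fun t ht => by rw [mem_range] at ht; exact Nat.min_eq_right (by omega))
  · rw [Finset.sum_congr rfl (g := fun _ => x) (fun t ht => by rw [mem_Ico] at ht; exact Nat.min_eq_left (by omega))]
    rw [Finset.sum_const, Nat.card_Ico, smul_eq_mul]

lemma gauss (x : ℕ) : (∑ j ∈ range x, j) * 2 + x = x * x := by
  have h := Finset.sum_range_id_mul_two x
  cases x with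
  | zero => simp
  | succ n => rw [h]; simp [Nat.succ_sub_one]; ring

lemma per_index (T i x : ℕ) (hiT : i ≤ T) (hx : x ≤ T) :
    (∑ j ∈ range x, (j : ℤ)) - (i : ℤ) * (x : ℤ)
      = ∑ t ∈ range T, (((if i ≤ t then x else 0 : ℕ) : ℤ) - ((min x (t + 1) : ℕ) : ℤ)) := by
  rw [Finset.sum_sub_distrib]
  have h1 : ∑ t ∈ range T, (if i ≤ t then x else 0) = (T - i) * x := by
    rw [Finset.sum_ite, Finset.sum_const, Finset.sum_const_zero, add_zero]
    congr 1
    have : (range T).filter (fun t => i ≤ t) = Ico i T := by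
      ext t; simp only [mem_filter, mem_range, mem_Ico]; omega
    rw [this, Nat.card_Ico]
  have h2 := min_split x T hx
  have h3 := gauss x
  have h4 : ∑ t ∈ range x, (t + 1) = (∑ j ∈ range x, j) + x := by
    rw [Finset.sum_add_distrib, Finset.sum_const, card_range, smul_eq_mul, mul_one]
  have hc1 : ∑ t ∈ range T, (((if i ≤ t then x else 0 : ℕ)) : ℤ) = ((T - i) * x : ℕ) := by
    rw [← h1]; push_cast; rfl
  have hc2 : ∑ t ∈ range T, ((min x (t + 1) : ℕ) : ℤ)
      = (((∑ t ∈ range x, (t + 1)) + (T - x) * x : ℕ) : ℤ) := by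
    rw [← h2]; push_cast; rfl
  rw [hc1, hc2, h4]
  have e1 : ((T - i : ℕ) : ℤ) = (T : ℤ) - i := by omega
  have e2 : ((T - x : ℕ) : ℤ) = (T : ℤ) - x := by omega
  have e3 : ((∑ j ∈ range x, j : ℕ) : ℤ) * 2 + x = (x : ℤ) * x := by
    exact_mod_cast congrArg (Nat.cast : ℕ → ℤ) h3
  push_cast [e1, e2] at *
  linarith

lemma core (N T : ℕ) (hNT : N ≤ T) (a r : ℕ → ℕ)
    (ha : ∀ i, a i ≤ T) (hr : ∀ i, r i ≤ T)
    (hanti : ∀ i i', i ≤ i' → a i' ≤ a i)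
    (htot : ∑ i ∈ range N, a i = ∑ i ∈ range N, r i)
    (hpre : ∀ k, k ≤ N → ∑ i ∈ range k, a i ≤ ∑ i ∈ range k, r i) :
    ∑ i ∈ range N, ((∑ j ∈ range (a i), (j : ℤ)) - (i : ℤ) * (a i : ℤ))
      ≤ ∑ i ∈ range N, ((∑ j ∈ range (r i), (j : ℤ)) - (i : ℤ) * (r i : ℤ)) := by
  have key : ∀ x : ℕ → ℕ, (∀ i, x i ≤ T) →
      ∑ i ∈ range N, ((∑ j ∈ range (x i), (j : ℤ)) - (i : ℤ) * (x i : ℤ))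
        = ∑ t ∈ range T, (∑ i ∈ range N, ((if i ≤ t then x i else 0 : ℕ) : ℤ)
            - ∑ i ∈ range N, ((min (x i) (t + 1) : ℕ) : ℤ)) := by
    intro x hx
    have : ∀ i ∈ range N, (∑ j ∈ range (x i), (j : ℤ)) - (i : ℤ) * (x i : ℤ)
        = ∑ t ∈ range T, (((if i ≤ t then x i else 0 : ℕ) : ℤ) - ((min (x i) (t + 1) : ℕ) : ℤ)) :=
      fun i hi => per_index T i (x i) (by rw [mem_range] at hi; omega) (hx i)
    rw [Finset.sum_congr rfl this, Finset.sum_comm]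
    exact Finset.sum_congr rfl (fun t _ => by rw [Finset.sum_sub_distrib])
  rw [key a ha, key r hr]
  apply Finset.sum_le_sum
  intro t _
  have hprefix : ∀ x : ℕ → ℕ, ∑ i ∈ range N, (if i ≤ t then x i else 0)
      = ∑ i ∈ range (min (t + 1) N), x i := by
    intro x
    rw [Finset.sum_ite, Finset.sum_const_zero, add_zero]
    apply Finset.sum_congr _ (fun _ _ => rfl)
    ext i; simp only [mem_filter, mem_range, mem_range]; omega
  have hc1 : ∑ i ∈ range N, (if i ≤ t then a i else 0) ≤ ∑ i ∈ range N, (if i ≤ t then r i else 0) := by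
    rw [hprefix a, hprefix r]
    exact hpre _ (by omega)
  have hc2 : ∑ i ∈ range N, min (r i) (t + 1) ≤ ∑ i ∈ range N, min (a i) (t + 1) :=
    claim2 N (t + 1) a r hanti htot hpre
  have hc1' : ∑ i ∈ range N, ((if i ≤ t then a i else 0 : ℕ) : ℤ)
      ≤ ∑ i ∈ range N, ((if i ≤ t then r i else 0 : ℕ) : ℤ) := by
    rw [← Nat.cast_sum, ← Nat.cast_sum]; exact_mod_cast hc1
  have hc2' : ∑ i ∈ range N, ((min (r i) (t + 1) : ℕ) : ℤ)
      ≤ ∑ i ∈ range N, ((min (a i) (t + 1) : ℕ) : ℤ) := by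
    rw [← Nat.cast_sum, ← Nat.cast_sum]; exact_mod_cast hc2
  omega

end Arith

section Main

variable {Y : YoungDiagram} {S : ℕ × ℕ → ℕ} {m : ℕ}

lemma syt_row_mono (hS : IsSYT Y S) :
    ∀ i j j', (i, j) ∈ Y → j' ≤ j → S (i, j') ≤ S (i, j) := by
  intro i j j' hY hj'
  rcases eq_or_lt_of_le hj' with rfl | hlt
  · exact le_rfl
  · exact le_of_lt (hS.2 (i, j') (Y.up_left_mem le_rfl hj' hY) (i, j) hY le_rfl hj'
      (by simp; omega))

lemma rowIns_row_mono (Y : YoungDiagram) :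
    ∀ i j j', (i, j) ∈ Y → j' ≤ j → rowIns Y (i, j') ≤ rowIns Y (i, j) := by
  intro i j j' _ hj'
  simp only [rowIns]
  omega

lemma cnt_syt_anti (hS : IsSYT Y S) (i i' : ℕ) (h : i ≤ i') :
    cnt Y m S i' ≤ cnt Y m S i := by
  by_cases h0 : cnt Y m S i' = 0
  · omega
  have hj : cnt Y m S i' - 1 < cnt Y m S i' := by omega
  have hchar' := (cnt_char Y m S (syt_row_mono hS) i' (cnt Y m S i' - 1)).mpr hj
  set j := cnt Y m S i' - 1
  have hYij : (i, j) ∈ Y := Y.up_left_mem h le_rfl hchar'.1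
  have hle : S (i, j) ≤ S (i', j) := by
    rcases eq_or_lt_of_le h with rfl | hlt
    · exact le_rfl
    · exact le_of_lt (hS.2 (i, j) hYij (i', j) hchar'.1 h le_rfl (by simp; omega))
  have := (cnt_char Y m S (syt_row_mono hS) i j).mp ⟨hYij, le_trans hle hchar'.2⟩
  omega

lemma card_filter_syt (hS : IsSYT Y S) :
    (Y.cells.filter fun c => S c ≤ m).card = min m Y.card := by
  classical
  have hcard : (Y.cells.filter fun c => S c ≤ m).card
      = ((Finset.Icc 1 Y.card).filter fun v => v ≤ m).card := by
    apply Finset.card_bij (fun c _ => S c)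
    · intro c hc
      rw [mem_filter] at hc ⊢
      have := hS.1.1 (by exact_mod_cast hc.1)
      simp only [Set.mem_Icc] at this
      exact ⟨Finset.mem_Icc.mpr this, hc.2⟩
    · intro c hc d hd hcd
      exact hS.1.2.1 (by exact_mod_cast (mem_filter.mp hc).1)
        (by exact_mod_cast (mem_filter.mp hd).1) hcd
    · intro v hv
      rw [mem_filter, Finset.mem_Icc] at hv
      obtain ⟨c, hc, hSc⟩ := hS.1.2.2 (show v ∈ Set.Icc 1 Y.card by
        simp only [Set.mem_Icc]; omega)
      refine ⟨c, ?_, hSc⟩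
      rw [mem_filter]
      exact ⟨by exact_mod_cast hc, by omega⟩
  rw [hcard]
  have : (Finset.Icc 1 Y.card).filter (fun v => v ≤ m) = Finset.Icc 1 (min Y.card m) := by
    ext v; simp only [mem_filter, Finset.mem_Icc]; omega
  rw [this, Nat.card_Icc]
  omega

lemma cnt_rowIns (Y : YoungDiagram) (m i : ℕ) :
    cnt Y m (rowIns Y) i = min (Y.rowLen i) (m - ∑ i' ∈ range i, Y.rowLen i') := by
  have hchar := cnt_char Y m (rowIns Y) (rowIns_row_mono Y) i
  have h3 : ∀ j, ((i, j) ∈ Y ∧ rowIns Y (i, j) ≤ m)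
      ↔ j < min (Y.rowLen i) (m - ∑ i' ∈ range i, Y.rowLen i') := by
    intro j
    rw [YoungDiagram.mem_iff_lt_rowLen]
    simp only [rowIns]
    omega
  have key : ∀ j, j < cnt Y m (rowIns Y) i
      ↔ j < min (Y.rowLen i) (m - ∑ i' ∈ range i, Y.rowLen i') :=
    fun j => (hchar j).symm.trans (h3 j)
  have k1 := key (cnt Y m (rowIns Y) i)
  have k2 := key (min (Y.rowLen i) (m - ∑ i' ∈ range i, Y.rowLen i'))
  omega

lemma L (Y : YoungDiagram) (m : ℕ) (S : ℕ × ℕ → ℕ) (hS : IsSYT Y S) :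
    ∑ c ∈ Y.cells.filter (fun c => S c ≤ m), ((c.2 : ℤ) - (c.1 : ℤ))
      ≤ ∑ c ∈ Y.cells.filter (fun c => rowIns Y c ≤ m), ((c.2 : ℤ) - (c.1 : ℤ)) := by
  classical
  set N := Y.card + 1 with hN
  have hNbound : ∀ c ∈ Y.cells, c.1 < N := fun c hc => by
    have := fst_lt_card hc; omega
  rw [sum_g Y m S (syt_row_mono hS), sum_g Y m (rowIns Y) (rowIns_row_mono Y)]
  have hΛ : ∑ i ∈ range N, Y.rowLen i = Y.card := sum_rowLen Y hNbound
  have hsum_r : ∀ k, ∑ i ∈ range k, cnt Y m (rowIns Y) i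
      = min (∑ i ∈ range k, Y.rowLen i) m := by
    intro k
    rw [Finset.sum_congr rfl (fun i _ => cnt_rowIns Y m i)]
    exact greedy_prefix Y.rowLen m k
  have htot : ∑ i ∈ range N, cnt Y m S i = ∑ i ∈ range N, cnt Y m (rowIns Y) i := by
    rw [sum_cnt Y m S hNbound, card_filter_syt hS, hsum_r, hΛ]
    omega
  apply core N N le_rfl
  · intro i
    have := cnt_le_rowLen Y m S (syt_row_mono hS) i
    have := rowLen_le_card Y i
    omega
  · intro i
    have := cnt_le_rowLen Y m (rowIns Y) (rowIns_row_mono Y) i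
    have := rowLen_le_card Y i
    omega
  · exact cnt_syt_anti hS
  · exact htot
  · intro k hk
    rw [hsum_r]
    apply le_min
    · exact Finset.sum_le_sum (fun i _ => cnt_le_rowLen Y m S (syt_row_mono hS) i)
    · calc ∑ i ∈ range k, cnt Y m S i ≤ ∑ i ∈ range N, cnt Y m S i :=
            Finset.sum_le_sum_of_subset (Finset.range_subset_range.mpr hk)
      _ = min m Y.card := by rw [sum_cnt Y m S hNbound, card_filter_syt hS]
      _ ≤ m := min_le_left _ _

lemma cells_transpose (Y : YoungDiagram) :
    Y.transpose.cells = Y.cells.map (Equiv.prodComm ℕ ℕ).toEmbedding := by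
  simp [YoungDiagram.transpose]

lemma card_transpose (Y : YoungDiagram) : Y.transpose.card = Y.card := by
  show Y.transpose.cells.card = Y.cells.card
  rw [cells_transpose, Finset.card_map]

lemma isSYT_transpose (Y : YoungDiagram) (S : ℕ × ℕ → ℕ) (hS : IsSYT Y S) :
    IsSYT Y.transpose (fun c => S c.swap) := by
  constructor
  · rw [show (fun c : ℕ × ℕ => S c.swap) = S ∘ Prod.swap from rfl, card_transpose]
    apply Set.BijOn.comp hS.1
    refine ⟨?_, ?_, ?_⟩
    · intro c hc
      simp only [Finset.mem_coe, YoungDiagram.mem_cells] at hc ⊢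
      exact (YoungDiagram.mem_transpose).mp hc
    · intro c _ d _ hcd
      exact Prod.swap_injective hcd
    · intro c hc
      refine ⟨c.swap, ?_, Prod.swap_swap c⟩
      simp only [Finset.mem_coe, YoungDiagram.mem_cells] at hc ⊢
      rw [YoungDiagram.mem_transpose, Prod.swap_swap]
      exact hc
  · intro c hc d hd h1 h2 hne
    apply hS.2 c.swap _ d.swap _ h2 h1 (fun h => hne (Prod.swap_injective h))
    · simpa using (YoungDiagram.mem_transpose).mp ((YoungDiagram.mem_cells _).mp hc)
    · simpa using (YoungDiagram.mem_transpose).mp ((YoungDiagram.mem_cells _).mp hd)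

lemma sum_filter_transpose (Y : YoungDiagram) (p : ℕ × ℕ → ℕ) (m : ℕ) (f : ℕ × ℕ → ℤ) :
    ∑ c ∈ Y.transpose.cells.filter (fun c => p c ≤ m), f c
      = ∑ c ∈ Y.cells.filter (fun c => p c.swap ≤ m), f c.swap := by
  classical
  rw [cells_transpose, Finset.filter_map, Finset.sum_map]
  rfl

lemma rowIns_transpose (Y : YoungDiagram) (c : ℕ × ℕ) :
    rowIns Y.transpose c = colIns Y c.swap := by
  simp [rowIns, colIns, YoungDiagram.rowLen_transpose]

lemma L' (Y : YoungDiagram) (m : ℕ) (S : ℕ × ℕ → ℕ) (hS : IsSYT Y S) :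
    ∑ c ∈ Y.cells.filter (fun c => colIns Y c ≤ m), ((c.2 : ℤ) - (c.1 : ℤ))
      ≤ ∑ c ∈ Y.cells.filter (fun c => S c ≤ m), ((c.2 : ℤ) - (c.1 : ℤ)) := by
  classical
  have h := L Y.transpose m (fun c => S c.swap) (isSYT_transpose Y S hS)
  rw [sum_filter_transpose Y (fun c => S c.swap) m,
    sum_filter_transpose Y (rowIns Y.transpose) m] at h
  simp only [Prod.swap_swap] at h
  have hfe : (Y.cells.filter fun c => rowIns Y.transpose c.swap ≤ m)
      = Y.cells.filter (fun c => colIns Y c ≤ m) := by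
    apply Finset.filter_congr
    intro c _
    rw [rowIns_transpose, Prod.swap_swap]
  rw [hfe] at h
  have e1 : ∑ c ∈ Y.cells.filter (fun c => S c ≤ m), (((c.swap).2 : ℤ) - ((c.swap).1 : ℤ))
      = -∑ c ∈ Y.cells.filter (fun c => S c ≤ m), ((c.2 : ℤ) - (c.1 : ℤ)) := by
    rw [← Finset.sum_neg_distrib]
    exact Finset.sum_congr rfl (fun c _ => by simp [Prod.swap])
  have e2 : ∑ c ∈ Y.cells.filter (fun c => colIns Y c ≤ m), (((c.swap).2 : ℤ) - ((c.swap).1 : ℤ))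
      = -∑ c ∈ Y.cells.filter (fun c => colIns Y c ≤ m), ((c.2 : ℤ) - (c.1 : ℤ)) := by
    rw [← Finset.sum_neg_distrib]
    exact Finset.sum_congr rfl (fun c _ => by simp [Prod.swap])
  rw [e1, e2] at h
  linarith

lemma Dk_split (Y : YoungDiagram) (k : ℕ) (T : ℕ × ℕ → ℕ) :
    Dk Y T k = (∑ c ∈ Y.cells, ((c.2 : ℤ) - (c.1 : ℤ)))
      - ∑ c ∈ Y.cells.filter (fun c => T c ≤ Y.card - k), ((c.2 : ℤ) - (c.1 : ℤ)) := by
  classical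
  have h := Finset.sum_filter_add_sum_filter_not Y.cells (fun c => Y.card - k < T c)
    (fun c => ((c.2 : ℤ) - (c.1 : ℤ)))
  have hfe : (Y.cells.filter fun c => ¬ (Y.card - k < T c))
      = Y.cells.filter (fun c => T c ≤ Y.card - k) := by
    apply Finset.filter_congr
    intro c _
    simp [not_lt]
  rw [hfe] at h
  rw [Dk]
  linarith

end Main

end DkAux

/-- Among all standard Young tableaux of shape `λ ⊢ n`, the `k`-diagonal index
`D_S^k` is minimized by the row-insertion tableau and maximized by the
column-insertion tableau. -/
theorem Dk_rowIns_le_and_le_colIns (Y : YoungDiagram) (k : ℕ) (hk1 : 1 ≤ k)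
    (hkn : k ≤ Y.card) (S : ℕ × ℕ → ℕ) (hS : IsSYT Y S) :
    Dk Y (rowIns Y) k ≤ Dk Y S k ∧ Dk Y S k ≤ Dk Y (colIns Y) k := by
  have h1 := DkAux.L Y (Y.card - k) S hS
  have h2 := DkAux.L' Y (Y.card - k) S hS
  rw [DkAux.Dk_split Y k S, DkAux.Dk_split Y k (rowIns Y), DkAux.Dk_split Y k (colIns Y)]
  constructor <;> linarith
end

section
/- For every partition λ of n with m rows and every standard Young tableau S of shape λ, the quantity eig(S) = 1/n + (2(n-1))/(n·k·(2n-(k+1))) · D_S^k satisfies (2 - m)/n ≤ eig(S) ≤ λ₁/n, where D_S^k = Σ_{n-k < S(i,j) ≤ n} (j - i) and 1 ≤ k ≤ n. -/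
/-- The eigenvalue of the `k`-star transpositions shuffle attached to a standard
Young tableau `S` of shape `Y ⊢ n`:
`eig(S) = 1/n + (2(n-1))/(n·k·(2n-(k+1))) · D_S^k`. -/
noncomputable def eig (Y : YoungDiagram) (S : ℕ × ℕ → ℕ) (k : ℕ) : ℚ :=
  1 / (Y.card : ℚ) + (2 * ((Y.card : ℚ) - 1)) /
      ((Y.card : ℚ) * (k : ℚ) * (2 * (Y.card : ℚ) - ((k : ℚ) + 1))) * (Dk Y S k : ℚ)

open Finset

lemma cell_col_le {Y : YoungDiagram} {c : ℕ × ℕ} (hc : c ∈ Y.cells) : c.2 < Y.rowLen 0 := by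
  rw [YoungDiagram.mem_cells] at hc
  have h1 : (c.1, c.2) ∈ Y := by simpa using hc
  have h2 : c.2 < Y.rowLen c.1 := YoungDiagram.mem_iff_lt_rowLen.mp h1
  exact lt_of_lt_of_le h2 (Y.rowLen_anti 0 c.1 (Nat.zero_le _))

private lemma natArith (q N S Rc w n : ℕ)
    (e1 : q * (N + S) ≤ q * (Rc * (w + 1)))
    (e2 : q * Rc ≤ q * (S + 1))
    (e3 : w * (N + S + Rc * q) ≤ w * n) :
    (w + q) * N + w ≤ n * w + (w + q) := by
  nlinarith [e1, e2, e3]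

lemma countP (Y : YoungDiagram) (a w : ℕ) (ha : Y.rowLen 0 = a + 1) :
    a * ((Y.cells.filter fun c => a + c.1 ≤ w + c.2).card) + w ≤ Y.card * w + a := by
  have hY1 : 1 ≤ Y.card := by
    have h00 : ((0,0) : ℕ × ℕ) ∈ Y.cells := by
      rw [YoungDiagram.mem_cells]
      exact YoungDiagram.mem_iff_lt_rowLen.mpr (by omega)
    exact Finset.card_pos.mpr ⟨_, h00⟩
  rcases le_or_gt a w with haw | haw
  · have hN : (Y.cells.filter fun c => a + c.1 ≤ w + c.2).card ≤ Y.card :=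
      Finset.card_filter_le _ _
    nlinarith [Nat.mul_le_mul_left a hN, Nat.mul_le_mul (Nat.le_refl 1) hN]
  · obtain ⟨q, hq1, haq⟩ : ∃ q, 1 ≤ q ∧ a = w + q := ⟨a - w, by omega, by omega⟩
    set F := Y.cells.filter fun c => a + c.1 ≤ w + c.2 with hF
    rcases F.eq_empty_or_nonempty with hFe | hFne
    · rw [hFe]
      simp only [Finset.card_empty, Nat.mul_zero, Nat.zero_add]
      nlinarith [hY1]
    · set R := F.image Prod.fst with hR
      have hRne : R.Nonempty := hFne.image _
      have hcard : F.card = ∑ i ∈ R, (F.filter fun c => c.1 = i).card :=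
        Finset.card_eq_sum_card_fiberwise (fun c hc => Finset.mem_image_of_mem _ hc)
      have hrow : ∀ i ∈ R, ((F.filter fun c => c.1 = i).card + i ≤ w + 1 ∧
          (F.filter fun c => c.1 = i).card + i + q ≤ Y.rowLen i) := by
        intro i hi
        obtain ⟨c, hcF, hci⟩ := Finset.mem_image.mp hi
        have hGne : (F.filter fun c => c.1 = i).Nonempty :=
          ⟨c, Finset.mem_filter.mpr ⟨hcF, hci⟩⟩
        have hmem : ∀ d ∈ F.filter fun c => c.1 = i,
            d.1 = i ∧ i + q ≤ d.2 ∧ d.2 < Y.rowLen i ∧ d.2 ≤ a := by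
          intro d hd
          obtain ⟨hdF, hdi⟩ := Finset.mem_filter.mp hd
          obtain ⟨hdc, hdq⟩ := Finset.mem_filter.mp hdF
          have hda : d.2 < a + 1 := by rw [← ha]; exact cell_col_le hdc
          have h1 : (d.1, d.2) ∈ Y := by
            simpa using (YoungDiagram.mem_cells (μ := Y) d).mp hdc
          have h2 : d.2 < Y.rowLen d.1 := YoungDiagram.mem_iff_lt_rowLen.mp h1
          refine ⟨hdi, by omega, by rwa [hdi] at h2, by omega⟩
        have hinj : Set.InjOn (fun d : ℕ × ℕ => d.2) ↑(F.filter fun c => c.1 = i) := by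
          intro d hd e he hde
          have h1 := (hmem d (by simpa using hd)).1
          have h2 := (hmem e (by simpa using he)).1
          exact Prod.ext (h1.trans h2.symm) hde
        have hc1 : (F.filter fun c => c.1 = i).card ≤ (Finset.Ico (i+q) (Y.rowLen i)).card := by
          apply Finset.card_le_card_of_injOn (fun d => d.2) _ hinj
          intro d hd
          obtain ⟨_, hq2, hq3, _⟩ := hmem d hd
          exact Finset.mem_Ico.mpr ⟨hq2, hq3⟩
        have hc2 : (F.filter fun c => c.1 = i).card ≤ (Finset.Ico (i+q) (a+1)).card := by
          apply Finset.card_le_card_of_injOn (fun d => d.2) _ hinj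
          intro d hd
          dsimp only
          obtain ⟨_, hq2, _, hq4⟩ := hmem d hd
          exact Finset.mem_Ico.mpr ⟨hq2, by omega⟩
        rw [Nat.card_Ico] at hc1 hc2
        have hG1 : 1 ≤ (F.filter fun c => c.1 = i).card := Finset.card_pos.mpr hGne
        constructor
        · omega
        · omega
      have h1 : F.card + (∑ i ∈ R, i) ≤ R.card * (w + 1) := by
        have := Finset.sum_le_sum (fun i hi => (hrow i hi).1)
        rw [Finset.sum_add_distrib, Finset.sum_const, smul_eq_mul] at this
        omega
      have h2 : F.card + (∑ i ∈ R, i) + R.card * q ≤ Y.card := by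
        have hb : ∑ i ∈ R, ((F.filter fun c => c.1 = i).card + i + q) ≤ ∑ i ∈ R, Y.rowLen i :=
          Finset.sum_le_sum (fun i hi => (hrow i hi).2)
        rw [Finset.sum_add_distrib, Finset.sum_add_distrib, Finset.sum_const, smul_eq_mul] at hb
        have hrows : ∑ i ∈ R, Y.rowLen i ≤ Y.card := by
          have hdisj : ∀ i ∈ R, ∀ j ∈ R, i ≠ j → Disjoint (Y.row i) (Y.row j) := by
            intro i _ j _ hij
            rw [Finset.disjoint_left]
            intro c hci hcj
            rw [YoungDiagram.mem_row_iff] at hci hcj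
            exact hij (hci.2.symm.trans hcj.2)
          calc ∑ i ∈ R, Y.rowLen i = ∑ i ∈ R, (Y.row i).card := by
                apply Finset.sum_congr rfl
                intro i _
                exact Y.rowLen_eq_card
            _ = (R.biUnion Y.row).card := (Finset.card_biUnion hdisj).symm
            _ ≤ Y.cells.card := by
                apply Finset.card_le_card
                intro c hc
                obtain ⟨i, _, hci⟩ := Finset.mem_biUnion.mp hc
                rw [YoungDiagram.mem_row_iff] at hci
                exact (YoungDiagram.mem_cells c).mpr hci.1
            _ = Y.card := rfl
        omega
      have h3 : R.card ≤ (∑ i ∈ R, i) + 1 := by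
        have hM := R.max'_mem hRne
        have hMS : R.max' hRne ≤ (∑ i ∈ R, i) := Finset.single_le_sum (fun i _ => Nat.zero_le i) hM
        have hpM : R.card ≤ R.max' hRne + 1 := by
          have hsub : R ⊆ Finset.range (R.max' hRne + 1) := by
            intro i hi
            exact Finset.mem_range.mpr (Nat.lt_succ_of_le (R.le_max' i hi))
          simpa using Finset.card_le_card hsub
        omega
      have e1 : q * (F.card + (∑ i ∈ R, i)) ≤ q * (R.card * (w+1)) := Nat.mul_le_mul_left q h1
      have e2 : q * R.card ≤ q * ((∑ i ∈ R, i) + 1) := Nat.mul_le_mul_left q h3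
      have e3 : w * (F.card + (∑ i ∈ R, i) + R.card * q) ≤ w * Y.card := Nat.mul_le_mul_left w h2
      rw [haq]
      exact natArith q F.card (∑ i ∈ R, i) R.card w Y.card e1 e2 e3

lemma subsetSum (Y : YoungDiagram) (a : ℕ) (ha : Y.rowLen 0 = a + 1) :
    ∀ (k : ℕ) (T : Finset (ℕ × ℕ)), T.card = k → T ⊆ Y.cells →
      (a : ℤ) * k * (k - 1) ≤
        2 * ((Y.card : ℤ) - 1) * ∑ c ∈ T, ((a : ℤ) + c.1 - c.2) := by
  intro k
  induction k with
  | zero =>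
    intro T hT _
    rw [Finset.card_eq_zero.mp hT]
    simp
  | succ k ih =>
    intro T hT hsub
    have hne : T.Nonempty := by rw [← Finset.card_pos, hT]; omega
    obtain ⟨c₀, hc₀T, hmax⟩ := T.exists_max_image (fun c => a + c.1 - c.2) hne
    set w := a + c₀.1 - c₀.2 with hw
    have hcol : ∀ c ∈ T, c.2 ≤ a := by
      intro c hc
      have := cell_col_le (hsub hc)
      omega
    have hTF : T ⊆ Y.cells.filter fun c => a + c.1 ≤ w + c.2 := by
      intro c hc
      refine Finset.mem_filter.mpr ⟨hsub hc, ?_⟩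
      have h1 := hmax c hc
      have h2 := hcol c hc
      omega
    have hkN : k + 1 ≤ (Y.cells.filter fun c => a + c.1 ≤ w + c.2).card := by
      rw [← hT]; exact Finset.card_le_card hTF
    have hP := countP Y a w ha
    have hkey : a * (k + 1) + w ≤ Y.card * w + a := by
      have := Nat.mul_le_mul_left a hkN
      omega
    have hsplit : ∑ c ∈ T.erase c₀, ((a : ℤ) + c.1 - c.2) + ((a : ℤ) + c₀.1 - c₀.2)
        = ∑ c ∈ T, ((a : ℤ) + c.1 - c.2) := Finset.sum_erase_add _ _ hc₀T
    have hcard' : (T.erase c₀).card = k := by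
      rw [Finset.card_erase_of_mem hc₀T, hT]; omega
    have hih := ih (T.erase c₀) hcard' (fun c hc => hsub (Finset.mem_of_mem_erase hc))
    have hwz : ((a : ℤ) + c₀.1 - c₀.2) = (w : ℤ) := by
      have := hcol c₀ hc₀T
      push_cast [hw]
      omega
    -- cast hkey to ℤ : a * (k+1) ≤ (n-1) * w
    have hkeyz : (a : ℤ) * k ≤ ((Y.card : ℤ) - 1) * w := by
      have : (a : ℤ) * (k + 1) + w ≤ (Y.card : ℤ) * w + a := by exact_mod_cast hkey
      nlinarith [this]
    rw [← hsplit]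
    push_cast
    nlinarith [hih, hkeyz, hwz]

lemma mainUB (Y : YoungDiagram) (T : Finset (ℕ × ℕ)) (hsub : T ⊆ Y.cells) :
    2 * ((Y.card : ℤ) - 1) * ∑ c ∈ T, ((c.2 : ℤ) - c.1) ≤
      ((Y.rowLen 0 : ℤ) - 1) * T.card * (2 * Y.card - T.card - 1) := by
  rcases T.eq_empty_or_nonempty with rfl | hne
  · simp
  · obtain ⟨c, hc⟩ := hne
    have hr1 : 1 ≤ Y.rowLen 0 := by
      have := cell_col_le (hsub hc)
      omega
    obtain ⟨a, ha⟩ : ∃ a, Y.rowLen 0 = a + 1 := ⟨Y.rowLen 0 - 1, by omega⟩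
    have hB := subsetSum Y a ha T.card T rfl hsub
    have hsum : ∑ c ∈ T, ((c.2 : ℤ) - c.1)
        = T.card * a - ∑ c ∈ T, ((a : ℤ) + c.1 - c.2) := by
      rw [Finset.sum_congr rfl (fun c _ => show ((c.2 : ℤ) - c.1) = a - ((a : ℤ) + c.1 - c.2) by ring),
        Finset.sum_sub_distrib, Finset.sum_const, nsmul_eq_mul]
    rw [hsum, ha]
    push_cast
    nlinarith [hB]

lemma cells_transpose (Y : YoungDiagram) :
    Y.transpose.cells = Y.cells.image Prod.swap := by
  ext c
  simp only [YoungDiagram.mem_cells, YoungDiagram.mem_transpose, Finset.mem_image]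
  constructor
  · intro h
    exact ⟨c.swap, (YoungDiagram.mem_cells _).mpr h, Prod.swap_swap c⟩
  · rintro ⟨d, hd, rfl⟩
    simpa using (YoungDiagram.mem_cells _).mp hd

lemma mainLB (Y : YoungDiagram) (T : Finset (ℕ × ℕ)) (hsub : T ⊆ Y.cells) :
    -(((Y.colLen 0 : ℤ) - 1) * T.card * (2 * Y.card - T.card - 1)) ≤
      2 * ((Y.card : ℤ) - 1) * ∑ c ∈ T, ((c.2 : ℤ) - c.1) := by
  have hsub' : T.image Prod.swap ⊆ Y.transpose.cells := by
    rw [cells_transpose]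
    exact Finset.image_subset_image hsub
  have h := mainUB Y.transpose (T.image Prod.swap) hsub'
  rw [Finset.sum_image (fun x _ y _ h => Prod.swap_injective h)] at h
  simp only [Prod.fst_swap, Prod.snd_swap] at h
  rw [Finset.card_image_of_injective _ Prod.swap_injective, card_transpose,
    YoungDiagram.rowLen_transpose] at h
  have hsum : ∑ c ∈ T, ((c.1 : ℤ) - c.2) = -∑ c ∈ T, ((c.2 : ℤ) - c.1) := by
    rw [← Finset.sum_neg_distrib]
    exact Finset.sum_congr rfl (fun c _ => by ring)
  rw [hsum] at h
  linarith

/-- For every partition `λ` of `n` with `m` rows and every standard Young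
tableau `S` of shape `λ`, `(2 - m)/n ≤ eig(S) ≤ λ₁/n`. -/
theorem eig_bounds (Y : YoungDiagram) (n m k : ℕ) (hY : Y.card = n)
    (hm : Y.colLen 0 = m) (hk1 : 1 ≤ k) (hkn : k ≤ n)
    (S : ℕ × ℕ → ℕ) (hS : IsSYT Y S) :
    (2 - (m : ℚ)) / (n : ℚ) ≤ eig Y S k ∧ eig Y S k ≤ (Y.rowLen 0 : ℚ) / (n : ℚ) := by
  have hn1 : 1 ≤ n := le_trans hk1 hkn
  obtain ⟨c₀, hc₀⟩ : Y.cells.Nonempty := by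
    rw [← Finset.card_pos]; show 0 < Y.card; omega
  have hr1 : 1 ≤ Y.rowLen 0 := by have := cell_col_le hc₀; omega
  have hm1 : 1 ≤ m := by
    rw [← hm]
    have h1 : (c₀.1, c₀.2) ∈ Y := by simpa using (YoungDiagram.mem_cells c₀).mp hc₀
    have h2 : c₀.1 < Y.colLen c₀.2 := YoungDiagram.mem_iff_lt_colLen.mp h1
    have h3 := Y.colLen_anti 0 c₀.2 (Nat.zero_le _)
    omega
  set T := Y.cells.filter (fun c => Y.card - k < S c) with hTdef
  have hTsub : T ⊆ Y.cells := Finset.filter_subset _ _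
  have hTcard : T.card = k := by
    have h := hS.1
    have hcd : T.card = (Finset.Icc (n - k + 1) n).card := by
      apply Finset.card_bij (fun c _ => S c)
      · intro c hc
        obtain ⟨hcY, hck⟩ := Finset.mem_filter.mp hc
        have hmem := h.mapsTo (Finset.mem_coe.mpr hcY)
        rw [Set.mem_Icc, hY] at hmem
        rw [hY] at hck
        rw [Finset.mem_Icc]
        omega
      · intro c hc d hd hcd
        exact h.injOn (Finset.mem_coe.mpr (hTsub hc)) (Finset.mem_coe.mpr (hTsub hd)) hcd
      · intro v hv
        rw [Finset.mem_Icc] at hv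
        have hv' : v ∈ Set.Icc 1 Y.card := by
          rw [Set.mem_Icc, hY]; omega
        obtain ⟨c, hcY, hcv⟩ := h.surjOn hv'
        refine ⟨c, Finset.mem_filter.mpr ⟨Finset.mem_coe.mp hcY, ?_⟩, hcv⟩
        rw [hY, hcv]; omega
    rw [hcd, Nat.card_Icc]
    omega
  have hDk : Dk Y S k = ∑ c ∈ T, ((c.2 : ℤ) - (c.1 : ℤ)) := rfl
  have hub := mainUB Y T hTsub
  have hlb := mainLB Y T hTsub
  rw [hTcard, ← hDk, hY] at hub hlb
  rw [hm] at hlb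
  rcases eq_or_lt_of_le hn1 with h1 | h2
  · -- n = 1, k = 1
    have hk : k = 1 := by omega
    have heig : eig Y S k = 1 := by
      rw [eig, hY, ← h1, hk]
      norm_num
    rw [heig, ← h1]
    constructor
    · have hmq : (1:ℚ) ≤ (m:ℚ) := by exact_mod_cast hm1
      simp only [Nat.cast_one, div_one]
      linarith
    · have hrq : (1:ℚ) ≤ (Y.rowLen 0 : ℚ) := by exact_mod_cast hr1
      simp only [Nat.cast_one, div_one]
      linarith
  · -- n ≥ 2
    have hNpos : (0:ℚ) < n := by positivity
    have hKpos : (0:ℚ) < k := by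
      have : (0:ℕ) < k := hk1
      exact_mod_cast this
    have hWpos : (0:ℚ) < 2 * n - (k + 1) := by
      have : k + 1 ≤ 2 * n - 1 := by omega
      have h' : (k:ℚ) + 1 ≤ 2 * n - 1 := by
        push_cast
        have : ((k:ℚ) + 1) + 1 ≤ 2 * n := by exact_mod_cast (show k + 2 ≤ 2 * n by omega)
        linarith
      linarith
    have hden : (0:ℚ) < (n:ℚ) * k * (2 * n - (k + 1)) := by positivity
    have hubQ : 2 * ((n:ℚ) - 1) * (Dk Y S k : ℚ) ≤
        ((Y.rowLen 0 : ℚ) - 1) * k * (2 * n - k - 1) := by exact_mod_cast hub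
    have hlbQ : -(((m:ℚ) - 1) * k * (2 * n - k - 1)) ≤
        2 * ((n:ℚ) - 1) * (Dk Y S k : ℚ) := by exact_mod_cast hlb
    have heig : eig Y S k = 1 / (n:ℚ) +
        (2 * ((n:ℚ) - 1) * (Dk Y S k : ℚ)) / ((n:ℚ) * k * (2 * n - (k + 1))) := by
      rw [eig, hY]
      ring
    rw [heig]
    have hup : (2 * ((n:ℚ) - 1) * (Dk Y S k : ℚ)) / ((n:ℚ) * k * (2 * n - (k + 1))) ≤
        ((Y.rowLen 0 : ℚ) - 1) / n := by
      rw [div_le_div_iff₀ hden hNpos]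
      nlinarith [mul_le_mul_of_nonneg_right hubQ hNpos.le]
    have hlo : (-((m:ℚ) - 1)) / n ≤
        (2 * ((n:ℚ) - 1) * (Dk Y S k : ℚ)) / ((n:ℚ) * k * (2 * n - (k + 1))) := by
      rw [div_le_div_iff₀ hNpos hden]
      nlinarith [mul_le_mul_of_nonneg_right hlbQ hNpos.le]
    constructor
    · calc (2 - (m:ℚ)) / n = 1 / n + (-((m:ℚ) - 1)) / n := by ring
        _ ≤ _ := by linarith [hlo]
    · calc 1 / (n:ℚ) + (2 * ((n:ℚ) - 1) * (Dk Y S k : ℚ)) / ((n:ℚ) * k * (2 * n - (k + 1)))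
          ≤ 1 / n + ((Y.rowLen 0 : ℚ) - 1) / n := by linarith [hup]
        _ = (Y.rowLen 0 : ℚ) / n := by ring
end

section
/- Let λ ⊢ n with λ₁ > 6n/10 and let k ≤ λ₁ - λ₂. Then for any standard Young tableau S of shape λ, |1/n + ((n-1)/(n·k·(n-(k+1)/2)))·D_S^k| ≤ 1 - ((n-1)/(n-(k+1)/2))·((n-λ₁)/n)·((λ₁+1)/n). -/
lemma sum_range_card_le (A : Finset ℕ) : ∑ i ∈ Finset.range A.card, i ≤ ∑ a ∈ A, a := by
  induction A using Finset.strongInduction with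
  | _ A ih =>
    rcases A.eq_empty_or_nonempty with rfl | hA
    · simp
    · have hmax := A.max'_mem hA
      have hsub : A.erase (A.max' hA) ⊂ A := Finset.erase_ssubset hmax
      have h1 := ih _ hsub
      have hcard : (A.erase (A.max' hA)).card = A.card - 1 := Finset.card_erase_of_mem hmax
      have hcard1 : 1 ≤ A.card := Finset.card_pos.mpr hA
      have hle : A.card - 1 ≤ A.max' hA := by
        have hsub2 : A ⊆ Finset.range (A.max' hA + 1) := fun x hx =>
          Finset.mem_range.mpr (Nat.lt_succ_of_le (Finset.le_max' A x hx))
        have := Finset.card_le_card hsub2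
        simp only [Finset.card_range] at this
        omega
      have hsum : ∑ a ∈ A, a = A.max' hA + ∑ a ∈ A.erase (A.max' hA), a :=
        (Finset.add_sum_erase _ _ hmax).symm
      have hr : Finset.range A.card = insert (A.card - 1) (Finset.range (A.card - 1)) := by
        rw [← Finset.range_add_one]; congr 1; omega
      rw [hsum, hr, Finset.sum_insert (by simp)]
      rw [hcard] at h1
      omega

lemma cast_mul_pred_nonneg (m : ℕ) : (0:ℤ) ≤ (m:ℤ) * ((m:ℤ) - 1) := by
  rcases m with _ | m
  · simp
  · push_cast; nlinarith [Nat.cast_nonneg (α := ℤ) m]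

lemma upper_arith (n k l D : ℚ) (hn : 2 ≤ n) (hk1 : 1 ≤ k) (hkl : k ≤ l) (hln : l ≤ n)
    (hll : 0 ≤ (n - l) * (n - l - 1)) (hD : 2 * D ≤ k * (2 * l - k - 1)) :
    1 / n + ((n - 1) / (n * k * (n - (k + 1) / 2))) * D
      ≤ 1 - ((n - 1) / (n - (k + 1) / 2)) * ((n - l) / n) * ((l + 1) / n) := by
  have hM : (0:ℚ) < n - (k + 1) / 2 := by nlinarith
  have hn0 : (0:ℚ) < n := by linarith
  have hk0 : (0:ℚ) < k := by linarith
  have hn' : n ≠ 0 := hn0.ne'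
  have hk' : k ≠ 0 := hk0.ne'
  have hM' : n - (k + 1) / 2 ≠ 0 := hM.ne'
  have heq : 1 - ((n - 1) / (n - (k + 1) / 2)) * ((n - l) / n) * ((l + 1) / n)
      - (1 / n + ((n - 1) / (n * k * (n - (k + 1) / 2))) * D)
      = ((n-1) * (n * k * (n - (k+1)/2) - k * (n-l) * (l+1) - n * D))
        / (n^2 * k * (n - (k + 1) / 2)) := by
    have h2M : 2 * n - k - 1 ≠ 0 := by intro h; apply hM.ne'; linarith
    generalize n - (k + 1) / 2 = M at hM' ⊢
    field_simp
    ring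
  have hnum : 0 ≤ (n-1) * (n * k * (n - (k+1)/2) - k * (n-l) * (l+1) - n * D) := by
    have h1 : n * (2 * D) ≤ n * (k * (2 * l - k - 1)) :=
      mul_le_mul_of_nonneg_left hD hn0.le
    nlinarith [mul_nonneg hk0.le hll]
  have h0 : 0 ≤ ((n-1) * (n * k * (n - (k+1)/2) - k * (n-l) * (l+1) - n * D))
        / (n^2 * k * (n - (k + 1) / 2)) := div_nonneg hnum (by positivity)
  linarith [heq, h0]

lemma lower_arith (n k l D : ℚ) (hn : 2 ≤ n) (hk1 : 1 ≤ k) (hkl : k ≤ l) (hln : l ≤ n)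
    (hrow : 6 * n + 1 ≤ 10 * l) (hD : k * (l - n) ≤ D) :
    -(1 - ((n - 1) / (n - (k + 1) / 2)) * ((n - l) / n) * ((l + 1) / n))
      ≤ 1 / n + ((n - 1) / (n * k * (n - (k + 1) / 2))) * D := by
  have hM : (0:ℚ) < n - (k + 1) / 2 := by nlinarith
  have hn0 : (0:ℚ) < n := by linarith
  have hk0 : (0:ℚ) < k := by linarith
  have hn' : n ≠ 0 := hn0.ne'
  have hk' : k ≠ 0 := hk0.ne'
  have hM' : n - (k + 1) / 2 ≠ 0 := hM.ne'
  have heq : 1 / n + ((n - 1) / (n * k * (n - (k + 1) / 2))) * D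
      + (1 - ((n - 1) / (n - (k + 1) / 2)) * ((n - l) / n) * ((l + 1) / n))
      = (n * k * (n - (k+1)/2) + n * (n-1) * D + n^2 * k * (n - (k+1)/2)
          - k * (n-1) * (n-l) * (l+1)) / (n^2 * k * (n - (k + 1) / 2)) := by
    have h2M : 2 * n - k - 1 ≠ 0 := by intro h; apply hM.ne'; linarith
    generalize n - (k + 1) / 2 = M at hM' ⊢
    field_simp
    ring
  have key : 2 * (n - 1) * (n - l) * (n + l + 1) ≤ n * (n + 1) * (2 * n - l - 1) := by
    nlinarith [mul_nonneg (by linarith : (0:ℚ) ≤ 10*l-6*n-1) (by linarith : (0:ℚ) ≤ n-l),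
      mul_nonneg (mul_nonneg (by linarith : (0:ℚ) ≤ 10*l-6*n-1) (by linarith : (0:ℚ) ≤ n-l)) (by linarith : (0:ℚ) ≤ n-l),
      mul_nonneg (mul_nonneg (by linarith : (0:ℚ) ≤ 10*l-6*n-1) (by linarith : (0:ℚ) ≤ n)) (by linarith : (0:ℚ) ≤ n),
      mul_nonneg (mul_nonneg (by linarith : (0:ℚ) ≤ 10*l-6*n-1) (by linarith : (0:ℚ) ≤ n)) (by linarith : (0:ℚ) ≤ n-l),
      mul_nonneg (by linarith : (0:ℚ) ≤ n-l) (by linarith : (0:ℚ) ≤ n-l),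
      sq_nonneg (n-l), mul_pos (by linarith : (0:ℚ) < n) (by linarith : (0:ℚ) < n)]
  have hnum : 0 ≤ n * k * (n - (k+1)/2) + n * (n-1) * D + n^2 * k * (n - (k+1)/2)
          - k * (n-1) * (n-l) * (l+1) := by
    have h1 : n * (n-1) * (k * (l-n)) ≤ n * (n-1) * D :=
      mul_le_mul_of_nonneg_left hD (by nlinarith)
    have h2 : n * (n+1) * k * ((2*n-l-1)/2) ≤ n * (n+1) * k * (n - (k+1)/2) := by
      apply mul_le_mul_of_nonneg_left _ (by positivity)
      linarith
    nlinarith [mul_le_mul_of_nonneg_left key hk0.le]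
  have h0 : 0 ≤ (n * k * (n - (k+1)/2) + n * (n-1) * D + n^2 * k * (n - (k+1)/2)
          - k * (n-1) * (n-l) * (l+1)) / (n^2 * k * (n - (k + 1) / 2)) :=
    div_nonneg hnum (by positivity)
  linarith [heq, h0]



set_option maxHeartbeats 1000000 in
/-- If `λ ⊢ n` has `λ₁ > 6n/10` and `k ≤ λ₁ - λ₂`, then for every standard
Young tableau `S` of shape `λ`,
`|1/n + ((n-1)/(n·k·(n-(k+1)/2)))·D_S^k| ≤ 1 - ((n-1)/(n-(k+1)/2))·((n-λ₁)/n)·((λ₁+1)/n)`. -/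
theorem eig_bound_long_first_row (Y : YoungDiagram) (n k : ℕ) (hY : Y.card = n)
    (hrow : 10 * Y.rowLen 0 > 6 * n) (hk1 : 1 ≤ k) (hk : k ≤ Y.rowLen 0 - Y.rowLen 1)
    (S : ℕ × ℕ → ℕ) (hS : IsSYT Y S) :
    |1 / (n : ℚ) + (((n : ℚ) - 1) / ((n : ℚ) * (k : ℚ) * ((n : ℚ) - ((k : ℚ) + 1) / 2)))
        * (Dk Y S k : ℚ)|
      ≤ 1 - (((n : ℚ) - 1) / ((n : ℚ) - ((k : ℚ) + 1) / 2))
          * (((n : ℚ) - (Y.rowLen 0 : ℚ)) / (n : ℚ)) * (((Y.rowLen 0 : ℚ) + 1) / (n : ℚ)) := by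
  obtain ⟨hbij, -⟩ := hS
  set l := Y.rowLen 0 with hl
  -- basic facts
  have h01 : Y.rowLen 1 ≤ l := Y.rowLen_anti 0 1 (by norm_num)
  have hln : l ≤ n := by
    rw [← hY, hl, Y.rowLen_eq_card]
    exact Finset.card_le_card (Finset.filter_subset _ _)
  have hl1 : 1 ≤ l := by omega
  have hkl : k ≤ l := by omega
  have hkrl : k + Y.rowLen 1 ≤ l := by omega
  have hn2 : 2 ≤ n ∨ n = 1 := by omega
  rcases hn2 with hn2 | rfl
  swap
  · -- n = 1
    have hk2 : k = 1 := by omega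
    subst hk2
    norm_num
  -- main case: n ≥ 2
  -- column bound
  have hcol : Y.colLen 0 + l ≤ n + 1 := by
    have hsub : Y.col 0 ∪ Y.row 0 ⊆ Y.cells :=
      Finset.union_subset (Finset.filter_subset _ _) (Finset.filter_subset _ _)
    have h1 : (Y.col 0 ∪ Y.row 0).card ≤ n := hY ▸ Finset.card_le_card hsub
    have h2 : (Y.col 0 ∩ Y.row 0).card ≤ 1 := by
      apply Finset.card_le_one.mpr
      intro a ha b hb
      simp only [Finset.mem_inter, YoungDiagram.mem_col_iff, YoungDiagram.mem_row_iff] at ha hb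
      have : a = (0, 0) := Prod.ext ha.2.2 ha.1.2
      have hb' : b = (0, 0) := Prod.ext hb.2.2 hb.1.2
      rw [this, hb']
    have h3 := Finset.card_union_add_card_inter (Y.col 0) (Y.row 0)
    rw [Y.colLen_eq_card, hl, Y.rowLen_eq_card]
    omega
  set T := Y.cells.filter (fun c => Y.card - k < S c) with hT
  have hTsub : T ⊆ Y.cells := Finset.filter_subset _ _
  -- |T| ≤ k
  have hDkT : Dk Y S k = ∑ c ∈ T, ((c.2 : ℤ) - (c.1 : ℤ)) := rfl
  have hTcard : T.card ≤ k := by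
    have := Finset.card_le_card_of_injOn (s := T) (t := Finset.Ioc (n - k) n) S
      (fun c hc => by
        obtain ⟨hc1, hc2⟩ := Finset.mem_filter.mp hc
        have hmem := hbij.mapsTo (Finset.mem_coe.mpr hc1)
        rw [Set.mem_Icc] at hmem
        refine Finset.mem_Ioc.mpr ⟨?_, ?_⟩ <;> omega)
      (hbij.injOn.mono (by exact_mod_cast Finset.coe_subset.mpr hTsub))
    rwa [Nat.card_Ioc, Nat.sub_sub_self (by omega : k ≤ n)] at this
  -- cell facts
  have hcell2 : ∀ c ∈ Y.cells, c.2 < Y.rowLen c.1 := by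
    intro c hc
    exact YoungDiagram.mem_iff_lt_rowLen.mp ((Y.mem_cells c).mp hc)
  have hcell1 : ∀ c ∈ Y.cells, c.1 ≤ n - l := by
    intro c hc
    have h1 : c.1 < Y.colLen c.2 := YoungDiagram.mem_iff_lt_colLen.mp ((Y.mem_cells c).mp hc)
    have h2 : Y.colLen c.2 ≤ Y.colLen 0 := Y.colLen_anti 0 c.2 (Nat.zero_le _)
    omega
  -- lower bound on Dk
  have hD_lo : (k : ℤ) * ((l : ℤ) - (n : ℤ)) ≤ Dk Y S k := by
    have h1 : T.card • ((l : ℤ) - (n : ℤ)) ≤ ∑ c ∈ T, ((c.2 : ℤ) - (c.1 : ℤ)) := by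
      apply Finset.card_nsmul_le_sum
      intro c hc
      have := hcell1 c (hTsub hc)
      have h2 : (c.1 : ℤ) ≤ (n : ℤ) - (l : ℤ) := by
        have : (c.1 : ℤ) ≤ ((n - l : ℕ) : ℤ) := by exact_mod_cast this
        omega
      have : (0:ℤ) ≤ (c.2 : ℤ) := Int.natCast_nonneg _
      omega
    have h2 : (k : ℤ) * ((l : ℤ) - (n : ℤ)) ≤ (T.card : ℤ) * ((l : ℤ) - (n : ℤ)) := by
      apply mul_le_mul_of_nonpos_right _ (by omega)
      exact_mod_cast hTcard
    rw [hDkT]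
    calc (k : ℤ) * ((l : ℤ) - (n : ℤ)) ≤ (T.card : ℤ) * ((l : ℤ) - (n : ℤ)) := h2
      _ = T.card • ((l : ℤ) - (n : ℤ)) := by simp [nsmul_eq_mul]
      _ ≤ _ := h1
  -- upper bound on Dk
  have hD_up : 2 * Dk Y S k ≤ (k : ℤ) * (2 * (l : ℤ) - (k : ℤ) - 1) := by
    set T₀ := T.filter (fun c => c.1 = 0) with hT0
    set T₁ := T.filter (fun c => ¬ c.1 = 0) with hT1
    have hsplit : Dk Y S k = ∑ c ∈ T₀, ((c.2 : ℤ) - (c.1 : ℤ))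
        + ∑ c ∈ T₁, ((c.2 : ℤ) - (c.1 : ℤ)) := by
      rw [hDkT]
      exact (Finset.sum_filter_add_sum_filter_not T _ _).symm
    have hcards : T₀.card + T₁.card = T.card := Finset.card_filter_add_card_filter_not _
    -- bound on T₁ terms
    have hB1 : ∑ c ∈ T₁, ((c.2 : ℤ) - (c.1 : ℤ)) ≤ T₁.card • ((l : ℤ) - (k : ℤ) - 2) := by
      apply Finset.sum_le_card_nsmul
      intro c hc
      simp only [hT1, Finset.mem_filter] at hc
      obtain ⟨hcT, hc1⟩ := hc
      have hcY : c ∈ Y := (Y.mem_cells c).mp (hTsub hcT)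
      have h1c : (1, c.2) ∈ Y := Y.up_left_mem (by omega) le_rfl hcY
      have h2 : c.2 < Y.rowLen 1 := YoungDiagram.mem_iff_lt_rowLen.mp h1c
      have h3 : (c.2 : ℤ) ≤ (l : ℤ) - (k : ℤ) - 1 := by
        have : c.2 + 1 + k ≤ l := by omega
        omega
      have h4 : (1 : ℤ) ≤ (c.1 : ℤ) := by exact_mod_cast Nat.one_le_iff_ne_zero.mpr hc1
      omega
    -- bound on T₀ sum
    have hB0 : 2 * ∑ c ∈ T₀, ((c.2 : ℤ) - (c.1 : ℤ))
        ≤ (T₀.card : ℤ) * (2 * (l : ℤ) - (T₀.card : ℤ) - 1) := by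
      have hfst : ∀ c ∈ T₀, c.1 = 0 := fun c hc => (Finset.mem_filter.mp hc).2
      have hsnd : ∀ c ∈ T₀, c.2 ≤ l - 1 := by
        intro c hc
        have := hcell2 c (hTsub (Finset.mem_filter.mp hc).1)
        rw [hfst c hc] at this
        omega
      set J := T₀.image (fun c => l - 1 - c.2) with hJ
      have hinj : Set.InjOn (fun c : ℕ × ℕ => l - 1 - c.2) (T₀ : Set (ℕ × ℕ)) := by
        intro a ha b hb hab
        have ha' := Finset.mem_coe.mp ha
        have hb' := Finset.mem_coe.mp hb
        have h1 := hsnd a ha'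
        have h2 := hsnd b hb'
        have : a.2 = b.2 := by simp only at hab; omega
        exact Prod.ext (by rw [hfst a ha', hfst b hb']) this
      have hJcard : J.card = T₀.card := Finset.card_image_of_injOn hinj
      have hJsum : ∑ j ∈ J, j = ∑ c ∈ T₀, (l - 1 - c.2) :=
        Finset.sum_image (fun a ha b hb h =>
          hinj (Finset.mem_coe.mpr ha) (Finset.mem_coe.mpr hb) h)
      have hgauss : T₀.card * (T₀.card - 1) ≤ 2 * ∑ j ∈ J, j := by
        have h1 := sum_range_card_le J
        have h2 : (∑ i ∈ Finset.range J.card, i) * 2 = J.card * (J.card - 1) :=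
          Finset.sum_range_id_mul_two _
        rw [hJcard] at h1 h2
        omega
      -- cast sum to ℤ
      have hcast : ((∑ j ∈ J, j : ℕ) : ℤ) = (T₀.card : ℤ) * ((l:ℤ) - 1) - ∑ c ∈ T₀, (c.2 : ℤ) := by
        rw [hJsum]
        push_cast
        rw [Finset.sum_congr rfl (fun c hc => by
          have := hsnd c hc
          have hcast2 : ((l - 1 - c.2 : ℕ) : ℤ) = (l:ℤ) - 1 - (c.2:ℤ) := by omega
          exact hcast2)]
        rw [Finset.sum_sub_distrib, Finset.sum_const, nsmul_eq_mul]
      have hsum0 : ∑ c ∈ T₀, ((c.2 : ℤ) - (c.1 : ℤ)) = ∑ c ∈ T₀, (c.2 : ℤ) := by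
        apply Finset.sum_congr rfl
        intro c hc
        rw [hfst c hc]
        simp
      rw [hsum0]
      have hg2 : (T₀.card : ℤ) * ((T₀.card : ℤ) - 1) ≤ 2 * ((T₀.card : ℤ) * ((l:ℤ) - 1) - ∑ c ∈ T₀, (c.2 : ℤ)) := by
        rw [← hcast]
        have hup : (T₀.card : ℤ) * ((T₀.card:ℤ) - 1) ≤ ((T₀.card * (T₀.card - 1) : ℕ) : ℤ) := by
          rcases Nat.eq_zero_or_pos T₀.card with h | h
          · simp [h]
          · push_cast [Nat.cast_sub h]; ring_nf; omega
        calc (T₀.card : ℤ) * ((T₀.card:ℤ) - 1) ≤ ((T₀.card * (T₀.card - 1) : ℕ) : ℤ) := hup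
          _ ≤ ((2 * ∑ j ∈ J, j : ℕ) : ℤ) := by exact_mod_cast hgauss
          _ = 2 * ((∑ j ∈ J, j : ℕ) : ℤ) := by push_cast; ring
      nlinarith [hg2]
    -- combine
    have ht01 : (T₀.card : ℤ) + (T₁.card : ℤ) ≤ (k : ℤ) := by
      have : T₀.card + T₁.card ≤ k := by omega
      exact_mod_cast this
    have hu := cast_mul_pred_nonneg (k - T₀.card)
    have ht0k : T₀.card ≤ k := by omega
    have hukT : ((k - T₀.card : ℕ) : ℤ) = (k:ℤ) - (T₀.card:ℤ) := by omega
    rw [hukT] at hu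
    have hprod : (0:ℤ) ≤ ((k:ℤ) - (T₀.card:ℤ) - (T₁.card:ℤ)) * ((l:ℤ) - (k:ℤ)) := by
      apply mul_nonneg (by omega)
      have : (k:ℤ) ≤ (l:ℤ) := by exact_mod_cast hkl
      omega
    have hB1' : ∑ c ∈ T₁, ((c.2 : ℤ) - (c.1 : ℤ)) ≤ (T₁.card : ℤ) * ((l : ℤ) - (k : ℤ) - 2) := by
      calc ∑ c ∈ T₁, ((c.2 : ℤ) - (c.1 : ℤ)) ≤ T₁.card • ((l : ℤ) - (k : ℤ) - 2) := hB1
        _ = (T₁.card : ℤ) * ((l : ℤ) - (k : ℤ) - 2) := by simp [nsmul_eq_mul]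
    have ht1nn : (0:ℤ) ≤ (T₁.card : ℤ) := Int.natCast_nonneg _
    have hident : (k:ℤ) * (2*(l:ℤ) - (k:ℤ) - 1)
        = (T₀.card:ℤ) * (2*(l:ℤ) - (T₀.card:ℤ) - 1) + 2*(T₁.card:ℤ)*((l:ℤ)-(k:ℤ)-2)
          + ((k:ℤ)-(T₀.card:ℤ)) * (((k:ℤ)-(T₀.card:ℤ)) - 1)
          + 2*(((k:ℤ)-(T₀.card:ℤ))-(T₁.card:ℤ))*((l:ℤ)-(k:ℤ)) + 4*(T₁.card:ℤ) := by
      ring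
    rw [hsplit]
    linarith [hB0, hB1', hu, hprod, hident, ht1nn]
  -- final: transfer to ℚ
  have hDup' : 2 * (Dk Y S k : ℚ) ≤ (k:ℚ) * (2 * (l:ℚ) - (k:ℚ) - 1) := by
    exact_mod_cast hD_up
  have hDlo' : (k:ℚ) * ((l:ℚ) - (n:ℚ)) ≤ (Dk Y S k : ℚ) := by exact_mod_cast hD_lo
  have hll : (0:ℚ) ≤ ((n:ℚ) - (l:ℚ)) * ((n:ℚ) - (l:ℚ) - 1) := by
    have := cast_mul_pred_nonneg (n - l)
    have hc : ((n - l : ℕ) : ℤ) = (n:ℤ) - (l:ℤ) := by omega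
    rw [hc] at this
    exact_mod_cast this
  rw [abs_le]
  constructor
  · exact lower_arith (n:ℚ) (k:ℚ) (l:ℚ) _ (by exact_mod_cast hn2) (by exact_mod_cast hk1)
      (by exact_mod_cast hkl) (by exact_mod_cast hln)
      (by exact_mod_cast hrow) hDlo'
  · exact upper_arith (n:ℚ) (k:ℚ) (l:ℚ) _ (by exact_mod_cast hn2) (by exact_mod_cast hk1)
      (by exact_mod_cast hkl) (by exact_mod_cast hln) hll hDup'
end

section
/- For the k-star transpositions chain on S_n (transition matrix P_k), the expected value at time t starting from the identity of the character χ_{(n-1,1)} equals k·(1 - (n-1)/n · n/(k(n-(k+1)/2)))^t + (n-1-k)·(1 - (n-1)/n · k/(k(n-(k+1)/2)))^t. -/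
set_option maxHeartbeats 1000000

open scoped Classical
open Finset Equiv

/-- The transition matrix of the `k`-star transpositions shuffle on `S_n`
(permutations of `Fin n`, positions `0,…,n-1` standing for cards `1,…,n`):
stay put with probability `1/n`, and apply a transposition `(i j)` with
`i < j` and `j ∈ {n-k+1,…,n}` (i.e. `(j : ℕ) ≥ n - k` in zero-indexed terms),
each with probability `(n-1)/(n·|T|)` where `|T| = k(2n-(k+1))/2`. -/
noncomputable def kStar (n k : ℕ) :
    Matrix (Equiv.Perm (Fin n)) (Equiv.Perm (Fin n)) ℝ := fun x y =>
  if y * x⁻¹ = 1 then 1 / (n : ℝ)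
  else if ∃ i j : Fin n, i < j ∧ n - k ≤ (j : ℕ) ∧ y * x⁻¹ = Equiv.swap i j then
    ((n : ℝ) - 1) / ((n : ℝ) * ((k : ℝ) * (2 * (n : ℝ) - ((k : ℝ) + 1)) / 2))
  else 0

namespace KStarProof

/-- allowed transposition index pairs -/
def T (n k : ℕ) : Finset (Fin n × Fin n) :=
  Finset.univ.filter fun p => p.1 < p.2 ∧ n - k ≤ (p.2 : ℕ)

/-- partners of `j` among allowed transpositions -/
def P (n k : ℕ) (j : Fin n) : Finset (Fin n) :=
  Finset.univ.filter fun m => m ≠ j ∧ (n - k ≤ (j : ℕ) ∨ n - k ≤ (m : ℕ))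

/-- normalizing probability -/
noncomputable def pc (n k : ℕ) : ℝ :=
  ((n : ℝ) - 1) / ((n : ℝ) * ((k : ℝ) * (2 * (n : ℝ) - ((k : ℝ) + 1)) / 2))

noncomputable def lam1 (n k : ℕ) : ℝ :=
  1 - ((n : ℝ) - 1) / (n : ℝ) * ((n : ℝ) / ((k : ℝ) * ((n : ℝ) - ((k : ℝ) + 1) / 2)))

noncomputable def lam2 (n k : ℕ) : ℝ :=
  1 - ((n : ℝ) - 1) / (n : ℝ) * ((k : ℝ) / ((k : ℝ) * ((n : ℝ) - ((k : ℝ) + 1) / 2)))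

noncomputable def wf (n : ℕ) (i0 : Fin n) : Fin n → ℝ :=
  fun m => (if m = i0 then 1 else 0) - 1 / (n : ℝ)

noncomputable def wg (n k : ℕ) : Fin n → ℝ :=
  fun m => (if n - k ≤ (m : ℕ) then 1 else 0) - (k : ℝ) / (n : ℝ)

variable {n k : ℕ}

lemma card_top (hkn : k ≤ n) :
    (Finset.univ.filter fun m : Fin n => n - k ≤ (m : ℕ)).card = k := by
  rw [Finset.card_filter]
  rw [Fin.sum_univ_eq_sum_range (fun i => if n - k ≤ i then 1 else 0) n]
  rw [← Finset.card_filter]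
  have : (Finset.range n).filter (fun i => n - k ≤ i) = Finset.Ico (n - k) n := by
    ext m; simp [Finset.mem_Ico, and_comm]
  rw [this, Nat.card_Ico]; omega

lemma card_T (hkn : k ≤ n) : (T n k).card = ∑ i ∈ Finset.range k, ((n - k) + i) := by
  rw [T, Finset.card_filter, Fintype.sum_prod_type_right]
  have h1 : ∀ b : Fin n, (∑ a : Fin n, if (a < b ∧ n - k ≤ (b : ℕ)) then 1 else 0)
      = if n - k ≤ (b : ℕ) then (b : ℕ) else 0 := by
    intro b
    by_cases hb : n - k ≤ (b : ℕ)
    · simp only [hb, and_true, if_true]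
      rw [← Finset.card_filter]
      have : (Finset.univ.filter fun a : Fin n => a < b) = Finset.Iio b := by
        ext a; simp
      rw [this, Fin.card_Iio]
    · simp [hb]
  rw [Finset.sum_congr rfl (fun b _ => h1 b)]
  rw [Fin.sum_univ_eq_sum_range (fun i => if n - k ≤ i then i else 0) n]
  rw [← Finset.sum_filter]
  have : (Finset.range n).filter (fun i => n - k ≤ i) = Finset.Ico (n - k) n := by
    ext m; simp [Finset.mem_Ico, and_comm]
  rw [this, Finset.sum_Ico_eq_sum_range]
  have hnk : n - (n - k) = k := by omega
  rw [hnk]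

lemma card_T_real (hn : 2 ≤ n) (hk1 : 1 ≤ k) (hkn : k ≤ n) :
    ((T n k).card : ℝ) = (k : ℝ) * (2 * (n : ℝ) - ((k : ℝ) + 1)) / 2 := by
  rw [card_T hkn]
  push_cast
  rw [Finset.sum_add_distrib, Finset.sum_const, Finset.card_range]
  have h2 : (∑ i ∈ Finset.range k, (i : ℝ)) = (k : ℝ) * ((k : ℝ) - 1) / 2 := by
    have h3 : ((∑ i ∈ Finset.range k, i) * 2 : ℕ) = (k * (k - 1) : ℕ) :=
      Finset.sum_range_id_mul_two k
    have h4 : ((∑ i ∈ Finset.range k, (i:ℝ)) * 2) = (k:ℝ) * ((k:ℝ) - 1) := by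
      have := congrArg (Nat.cast (R := ℝ)) h3
      push_cast [Nat.cast_sub hk1] at this ⊢
      convert this using 2
    linarith
  rw [h2]
  have : ((n - k : ℕ) : ℝ) = (n : ℝ) - (k : ℝ) := by
    push_cast [Nat.cast_sub hkn]; ring
  rw [this]; ring

lemma card_P_top {j : Fin n} (hj : n - k ≤ (j : ℕ)) :
    (P n k j).card = n - 1 := by
  have h : P n k j = Finset.univ.erase j := by
    ext m; simp [P, hj]
  rw [h, Finset.card_erase_of_mem (Finset.mem_univ j), Finset.card_univ, Fintype.card_fin]

lemma card_P_bot {j : Fin n} (hj : ¬ n - k ≤ (j : ℕ)) (hkn : k ≤ n) :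
    (P n k j).card = k := by
  have h : P n k j = Finset.univ.filter fun m : Fin n => n - k ≤ (m : ℕ) := by
    ext m
    simp only [P, Finset.mem_filter, Finset.mem_univ, true_and]
    constructor
    · rintro ⟨-, h | h⟩
      · exact absurd h hj
      · exact h
    · intro h
      refine ⟨fun hmj => hj ?_, Or.inr h⟩
      subst hmj; exact h
  rw [h, card_top hkn]

lemma card_P_filter_top_top {j : Fin n} (hj : n - k ≤ (j : ℕ)) (hkn : k ≤ n) :
    ((P n k j).filter fun m : Fin n => n - k ≤ (m : ℕ)).card = k - 1 := by
  have h : ((P n k j).filter fun m : Fin n => n - k ≤ (m : ℕ))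
      = (Finset.univ.filter fun m : Fin n => n - k ≤ (m : ℕ)).erase j := by
    ext m
    simp only [P, Finset.mem_filter, Finset.mem_univ, true_and, Finset.mem_erase]
    tauto
  rw [h, Finset.card_erase_of_mem, card_top hkn]
  simp only [Finset.mem_filter, Finset.mem_univ, true_and]
  omega
lemma card_P_filter_top_bot {j : Fin n} (hj : ¬ n - k ≤ (j : ℕ)) (hkn : k ≤ n) :
    ((P n k j).filter fun m : Fin n => n - k ≤ (m : ℕ)).card = k := by
  have h : ((P n k j).filter fun m : Fin n => n - k ≤ (m : ℕ))
      = Finset.univ.filter fun m : Fin n => n - k ≤ (m : ℕ) := by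
    ext m
    simp only [P, Finset.mem_filter, Finset.mem_univ, true_and]
    constructor
    · rintro ⟨-, h⟩; exact h
    · intro h
      refine ⟨⟨fun hmj => hj ?_, Or.inr h⟩, h⟩
      subst hmj; exact h
  rw [h, card_top hkn]

lemma mem_P_iff {j i0 : Fin n} :
    i0 ∈ P n k j ↔ i0 ≠ j ∧ (n - k ≤ (j : ℕ) ∨ n - k ≤ (i0 : ℕ)) := by
  simp [P]

lemma sum_Tin (w : Fin n → ℝ) (j : Fin n) :
    ∑ p ∈ (T n k).filter (fun p => p.1 = j ∨ p.2 = j), w (Equiv.swap p.1 p.2 j)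
      = ∑ m ∈ P n k j, w m := by
  refine Finset.sum_nbij' (i := fun p => if p.1 = j then p.2 else p.1)
    (j := fun m => if (m : Fin n) < j then (m, j) else (j, m)) ?_ ?_ ?_ ?_ ?_
  · rintro ⟨a, b⟩ hp
    simp only [T, Finset.mem_filter, Finset.mem_univ, true_and] at hp
    obtain ⟨⟨hab, hbk⟩, hinv⟩ := hp
    simp only [P, Finset.mem_filter, Finset.mem_univ, true_and]
    rcases hinv with h1 | h2
    · subst h1
      simp only [if_pos rfl]
      exact ⟨ne_of_gt hab, Or.inr hbk⟩
    · subst h2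
      rw [if_neg (ne_of_lt hab)]
      exact ⟨ne_of_lt hab, Or.inl hbk⟩
  · intro m hm
    simp only [P, Finset.mem_filter, Finset.mem_univ, true_and] at hm
    obtain ⟨hmj, hor⟩ := hm
    simp only [T, Finset.mem_filter, Finset.mem_univ, true_and]
    by_cases hlt : m < j
    · rw [if_pos hlt]
      refine ⟨⟨hlt, ?_⟩, Or.inr rfl⟩
      rcases hor with h | h
      · exact h
      · exact le_trans h (le_of_lt hlt)
    · rw [if_neg hlt]
      have hjm : j < m := lt_of_le_of_ne (not_lt.mp hlt) (Ne.symm hmj)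
      refine ⟨⟨hjm, ?_⟩, Or.inl rfl⟩
      rcases hor with h | h
      · exact le_trans h (le_of_lt hjm)
      · exact h
  · rintro ⟨a, b⟩ hp
    simp only [T, Finset.mem_filter, Finset.mem_univ, true_and] at hp
    obtain ⟨⟨hab, hbk⟩, hinv⟩ := hp
    dsimp only
    rcases hinv with h1 | h2
    · subst h1
      rw [if_pos rfl, if_neg (not_lt.mpr (le_of_lt hab))]
    · subst h2
      rw [if_neg (ne_of_lt hab), if_pos hab]
  · intro m hm
    simp only [P, Finset.mem_filter, Finset.mem_univ, true_and] at hm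
    obtain ⟨hmj, hor⟩ := hm
    by_cases hlt : m < j
    · rw [if_pos hlt]; dsimp only; rw [if_neg hmj]
    · rw [if_neg hlt]; dsimp only; rw [if_pos rfl]
  · rintro ⟨a, b⟩ hp
    simp only [T, Finset.mem_filter, Finset.mem_univ, true_and] at hp
    obtain ⟨⟨hab, hbk⟩, hinv⟩ := hp
    rcases hinv with h1 | h2
    · subst h1
      simp [Equiv.swap_apply_left]
    · subst h2
      simp [Equiv.swap_apply_right, if_neg (ne_of_lt hab)]

lemma card_Tin (j : Fin n) :
    ((T n k).filter (fun p => p.1 = j ∨ p.2 = j)).card = (P n k j).card := by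
  have := sum_Tin (n := n) (k := k) (fun _ => (1 : ℝ)) j
  simpa using this

lemma sum_T_swap (w : Fin n → ℝ) (j : Fin n) :
    ∑ p ∈ T n k, w (Equiv.swap p.1 p.2 j)
      = (((T n k).card : ℝ) - ((P n k j).card : ℝ)) * w j + ∑ m ∈ P n k j, w m := by
  classical
  rw [← Finset.sum_filter_add_sum_filter_not (T n k) (fun p => p.1 = j ∨ p.2 = j)]
  rw [sum_Tin]
  have hout : ∑ p ∈ (T n k).filter (fun p => ¬(p.1 = j ∨ p.2 = j)), w (Equiv.swap p.1 p.2 j)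
      = (((T n k).filter (fun p => ¬(p.1 = j ∨ p.2 = j))).card : ℝ) * w j := by
    rw [Finset.sum_congr rfl (fun p hp => ?_), Finset.sum_const, nsmul_eq_mul]
    simp only [Finset.mem_filter, not_or] at hp
    rw [Equiv.swap_apply_of_ne_of_ne (Ne.symm hp.2.1) (Ne.symm hp.2.2)]
  rw [hout]
  have hcard : ((T n k).filter (fun p => ¬(p.1 = j ∨ p.2 = j))).card
      = (T n k).card - (P n k j).card := by
    have h1 := Finset.card_filter_add_card_filter_not
      (s := T n k) (p := fun p => p.1 = j ∨ p.2 = j)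
    rw [card_Tin] at h1
    omega
  rw [hcard]
  have hle : (P n k j).card ≤ (T n k).card := by
    rw [← card_Tin]
    exact Finset.card_filter_le _ _
  rw [Nat.cast_sub hle]
  ring

lemma sum_P_wf (i0 j : Fin n) :
    ∑ m ∈ P n k j, wf n i0 m
      = (if i0 ∈ P n k j then 1 else 0) - ((P n k j).card : ℝ) / (n : ℝ) := by
  simp only [wf, Finset.sum_sub_distrib, Finset.sum_const, nsmul_eq_mul]
  rw [Finset.sum_ite_eq' (P n k j) i0 (fun _ => (1 : ℝ))]
  ring

lemma sum_P_wg (j : Fin n) :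
    ∑ m ∈ P n k j, wg n k m
      = (((P n k j).filter fun m : Fin n => n - k ≤ (m : ℕ)).card : ℝ)
        - ((P n k j).card : ℝ) * (k : ℝ) / (n : ℝ) := by
  simp only [wg, Finset.sum_sub_distrib, Finset.sum_const, nsmul_eq_mul]
  rw [Finset.sum_boole]
  ring


lemma swap_injOn : Set.InjOn (fun p : Fin n × Fin n => Equiv.swap p.1 p.2)
    {p | p.1 < p.2} := by
  rintro ⟨a, b⟩ hab ⟨c, d⟩ hcd h
  simp only [Set.mem_setOf_eq] at hab hcd
  dsimp only at h
  have happ : Equiv.swap c d a = b := by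
    rw [← h, Equiv.swap_apply_left]
  rw [Equiv.swap_apply_def] at happ
  split_ifs at happ with h1 h2
  · exact Prod.ext h1 happ.symm
  · have h3 : a < c := lt_of_lt_of_eq hab happ.symm
    have h4 : c < a := lt_of_lt_of_eq hcd h2.symm
    exact absurd (h3.trans h4) (lt_irrefl a)
  · exact absurd (happ ▸ hab) (lt_irrefl _)

lemma sum_kernel (v : Equiv.Perm (Fin n) → ℝ) (x : Equiv.Perm (Fin n)) :
    ∑ y : Equiv.Perm (Fin n), kStar n k x y * v y
      = 1 / (n : ℝ) * v x + pc n k * ∑ p ∈ T n k, v (Equiv.swap p.1 p.2 * x) := by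
  classical
  have hre : ∑ y : Equiv.Perm (Fin n), kStar n k x y * v y
      = ∑ g : Equiv.Perm (Fin n), kStar n k x (g * x) * v (g * x) :=
    (Equiv.sum_comp (Equiv.mulRight x) (fun y => kStar n k x y * v y)).symm
  rw [hre]
  set S : Finset (Equiv.Perm (Fin n)) := (T n k).image (fun p => Equiv.swap p.1 p.2) with hS
  have hex : ∀ g : Equiv.Perm (Fin n),
      (∃ i j : Fin n, i < j ∧ n - k ≤ (j : ℕ) ∧ g = Equiv.swap i j) ↔ g ∈ S := by
    intro g
    simp only [hS, Finset.mem_image, T, Finset.mem_filter, Finset.mem_univ, true_and,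
      Prod.exists]
    constructor
    · rintro ⟨i, j, h1, h2, h3⟩; exact ⟨i, j, ⟨h1, h2⟩, h3.symm⟩
    · rintro ⟨i, j, ⟨h1, h2⟩, h3⟩; exact ⟨i, j, h1, h2, h3.symm⟩
  have h1S : (1 : Equiv.Perm (Fin n)) ∉ S := by
    simp only [hS, Finset.mem_image, T, Finset.mem_filter, Finset.mem_univ, true_and,
      Prod.exists, not_exists]
    rintro i j ⟨⟨h1, -⟩, h3⟩
    exact absurd (Equiv.swap_eq_one_iff.mp h3) (ne_of_lt h1)
  have hker : ∀ g : Equiv.Perm (Fin n), kStar n k x (g * x) * v (g * x)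
      = (if g = 1 then 1 / (n : ℝ) * v (g * x) else 0)
        + (if g ∈ S then pc n k * v (g * x) else 0) := by
    intro g
    have : kStar n k x (g * x)
        = if g = 1 then 1 / (n : ℝ) else if g ∈ S then pc n k else 0 := by
      simp only [kStar, mul_inv_cancel_right, hex g, pc]
    rw [this]
    by_cases hg : g = 1
    · rw [if_pos hg, if_pos hg, if_neg (hg ▸ h1S), add_zero]
    · rw [if_neg hg, if_neg hg, zero_add]
      by_cases hgs : g ∈ S
      · rw [if_pos hgs, if_pos hgs]
      · rw [if_neg hgs, if_neg hgs, zero_mul]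
  rw [Finset.sum_congr rfl (fun g _ => hker g), Finset.sum_add_distrib]
  congr 1
  · rw [Finset.sum_ite_eq' Finset.univ (1 : Equiv.Perm (Fin n))
      (fun g => 1 / (n : ℝ) * v (g * x)), if_pos (Finset.mem_univ _), one_mul]
  · rw [Finset.sum_ite_mem, Finset.univ_inter, hS,
      Finset.sum_image (fun p hp q hq hpq => swap_injOn ?_ ?_ hpq), ← Finset.mul_sum]
    · rw [Finset.mem_coe] at hp; simp only [T, Finset.mem_filter] at hp; exact hp.2.1
    · rw [Finset.mem_coe] at hq; simp only [T, Finset.mem_filter] at hq; exact hq.2.1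

section eigen

variable (hn : 2 ≤ n) (hk1 : 1 ≤ k) (hkn : k ≤ n)

lemma eig_f_top (hn : 2 ≤ n) (hk1 : 1 ≤ k) (hkn : k ≤ n) {i0 : Fin n}
    (hi0 : n - k ≤ (i0 : ℕ)) (j : Fin n) :
    1 / (n : ℝ) * wf n i0 j + pc n k * ∑ p ∈ T n k, wf n i0 (Equiv.swap p.1 p.2 j)
      = lam1 n k * wf n i0 j := by
  have hN : (2 : ℝ) ≤ (n : ℝ) := by exact_mod_cast hn
  have hK : (1 : ℝ) ≤ (k : ℝ) := by exact_mod_cast hk1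
  have hKN : (k : ℝ) ≤ (n : ℝ) := by exact_mod_cast hkn
  have h1 : (n : ℝ) ≠ 0 := by linarith
  have h2 : (k : ℝ) ≠ 0 := by linarith
  have h3 : 2 * (n : ℝ) - ((k : ℝ) + 1) ≠ 0 := by nlinarith
  have h4 : (n : ℝ) - ((k : ℝ) + 1) / 2 ≠ 0 := by nlinarith
  rw [sum_T_swap, sum_P_wf, card_T_real hn hk1 hkn]
  by_cases hj : j = i0
  · subst hj
    rw [if_neg (fun h => (mem_P_iff.mp h).1 rfl), card_P_top hi0]
    have hcast : ((n - 1 : ℕ) : ℝ) = (n : ℝ) - 1 := by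
      rw [Nat.cast_sub (by omega)]; norm_num
    rw [hcast]
    simp only [wf, if_pos rfl, if_true, lam1, pc]
    have e2 : (n:ℝ) - ((k:ℝ)+1)/2 = (2*(n:ℝ)-((k:ℝ)+1))/2 := by ring
    rw [e2]
    set u := 2*(n:ℝ) - ((k:ℝ)+1) with hu
    have hu0 : u ≠ 0 := by rw [hu]; nlinarith
    field_simp
    ring
  · rw [if_pos (mem_P_iff.mpr ⟨fun h => hj h.symm, Or.inr hi0⟩)]
    simp only [wf, if_neg hj, lam1, pc]
    have e2 : (n:ℝ) - ((k:ℝ)+1)/2 = (2*(n:ℝ)-((k:ℝ)+1))/2 := by ring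
    rw [e2]
    set u := 2*(n:ℝ) - ((k:ℝ)+1) with hu
    have hu0 : u ≠ 0 := by rw [hu]; nlinarith
    field_simp
    ring

lemma eig_g (hn : 2 ≤ n) (hk1 : 1 ≤ k) (hkn : k ≤ n) (j : Fin n) :
    1 / (n : ℝ) * wg n k j + pc n k * ∑ p ∈ T n k, wg n k (Equiv.swap p.1 p.2 j)
      = lam1 n k * wg n k j := by
  have hN : (2 : ℝ) ≤ (n : ℝ) := by exact_mod_cast hn
  have hK : (1 : ℝ) ≤ (k : ℝ) := by exact_mod_cast hk1
  have hKN : (k : ℝ) ≤ (n : ℝ) := by exact_mod_cast hkn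
  have h1 : (n : ℝ) ≠ 0 := by linarith
  have h2 : (k : ℝ) ≠ 0 := by linarith
  have h3 : 2 * (n : ℝ) - ((k : ℝ) + 1) ≠ 0 := by nlinarith
  have h4 : (n : ℝ) - ((k : ℝ) + 1) / 2 ≠ 0 := by nlinarith
  have hcast1 : ((n - 1 : ℕ) : ℝ) = (n : ℝ) - 1 := by
    rw [Nat.cast_sub (by omega)]; norm_num
  have hcast2 : ((k - 1 : ℕ) : ℝ) = (k : ℝ) - 1 := by
    rw [Nat.cast_sub hk1]; norm_num
  rw [sum_T_swap, sum_P_wg, card_T_real hn hk1 hkn]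
  by_cases hj : n - k ≤ (j : ℕ)
  · rw [card_P_top hj, card_P_filter_top_top hj hkn, hcast1, hcast2]
    simp only [wg, if_pos hj, lam1, pc]
    have e2 : (n:ℝ) - ((k:ℝ)+1)/2 = (2*(n:ℝ)-((k:ℝ)+1))/2 := by ring
    rw [e2]
    set u := 2*(n:ℝ) - ((k:ℝ)+1) with hu
    have hu0 : u ≠ 0 := by rw [hu]; nlinarith
    field_simp
    ring
  · rw [card_P_bot hj hkn, card_P_filter_top_bot hj hkn]
    simp only [wg, if_neg hj, lam1, pc]
    have e2 : (n:ℝ) - ((k:ℝ)+1)/2 = (2*(n:ℝ)-((k:ℝ)+1))/2 := by ring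
    rw [e2]
    set u := 2*(n:ℝ) - ((k:ℝ)+1) with hu
    have hu0 : u ≠ 0 := by rw [hu]; nlinarith
    field_simp
    ring

lemma eig_F (hn : 2 ≤ n) (hk1 : 1 ≤ k) (hkn : k ≤ n) {i0 : Fin n}
    (hi0 : ¬ n - k ≤ (i0 : ℕ)) (j : Fin n) :
    1 / (n : ℝ) * (wf n i0 j + 1 / ((n : ℝ) - (k : ℝ)) * wg n k j)
      + pc n k * ∑ p ∈ T n k,
          (wf n i0 (Equiv.swap p.1 p.2 j)
            + 1 / ((n : ℝ) - (k : ℝ)) * wg n k (Equiv.swap p.1 p.2 j))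
      = lam2 n k * (wf n i0 j + 1 / ((n : ℝ) - (k : ℝ)) * wg n k j) := by
  have hklt : k < n := by omega
  have hN : (2 : ℝ) ≤ (n : ℝ) := by exact_mod_cast hn
  have hK : (1 : ℝ) ≤ (k : ℝ) := by exact_mod_cast hk1
  have hKN : (k : ℝ) < (n : ℝ) := by exact_mod_cast hklt
  have h1 : (n : ℝ) ≠ 0 := by linarith
  have h2 : (k : ℝ) ≠ 0 := by linarith
  have h3 : 2 * (n : ℝ) - ((k : ℝ) + 1) ≠ 0 := by nlinarith
  have h4 : (n : ℝ) - ((k : ℝ) + 1) / 2 ≠ 0 := by nlinarith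
  have h5 : (n : ℝ) - (k : ℝ) ≠ 0 := by linarith
  have hcast1 : ((n - 1 : ℕ) : ℝ) = (n : ℝ) - 1 := by
    rw [Nat.cast_sub (by omega)]; norm_num
  have hcast2 : ((k - 1 : ℕ) : ℝ) = (k : ℝ) - 1 := by
    rw [Nat.cast_sub hk1]; norm_num
  rw [Finset.sum_add_distrib, ← Finset.mul_sum, sum_T_swap (wf n i0), sum_T_swap (wg n k),
    sum_P_wf, sum_P_wg, card_T_real hn hk1 hkn]
  by_cases hj : j = i0
  · subst hj
    rw [if_neg (fun h => (mem_P_iff.mp h).1 rfl), card_P_bot hi0 hkn,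
      card_P_filter_top_bot hi0 hkn]
    simp only [wf, wg, if_pos rfl, if_neg hi0, lam2, pc]
    have e2 : (n:ℝ) - ((k:ℝ)+1)/2 = (2*(n:ℝ)-((k:ℝ)+1))/2 := by ring
    rw [e2]
    set u := 2*(n:ℝ) - ((k:ℝ)+1) with hu
    have hu0 : u ≠ 0 := by rw [hu]; nlinarith
    field_simp
    ring
  · by_cases hjt : n - k ≤ (j : ℕ)
    · rw [if_pos (mem_P_iff.mpr ⟨fun h => hj h.symm, Or.inl hjt⟩), card_P_top hjt,
        card_P_filter_top_top hjt hkn, hcast1, hcast2]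
      simp only [wf, wg, if_neg hj, if_pos hjt, lam2, pc]
      have e2 : (n:ℝ) - ((k:ℝ)+1)/2 = (2*(n:ℝ)-((k:ℝ)+1))/2 := by ring
      rw [e2]
      set u := 2*(n:ℝ) - ((k:ℝ)+1) with hu
      have hu0 : u ≠ 0 := by rw [hu]; nlinarith
      field_simp
      ring
    · rw [if_neg (fun h => by rcases (mem_P_iff.mp h).2 with h' | h' <;> [exact hjt h'; exact hi0 h']),
        card_P_bot hjt hkn, card_P_filter_top_bot hjt hkn]
      simp only [wf, wg, if_neg hj, if_neg hjt, lam2, pc]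
      have e2 : (n:ℝ) - ((k:ℝ)+1)/2 = (2*(n:ℝ)-((k:ℝ)+1))/2 := by ring
      rw [e2]
      set u := 2*(n:ℝ) - ((k:ℝ)+1) with hu
      have hu0 : u ≠ 0 := by rw [hu]; nlinarith
      field_simp
      ring

end eigen

section assemble

def IsEig (n k : ℕ) (v : Equiv.Perm (Fin n) → ℝ) (lam : ℝ) : Prop :=
  ∀ x, ∑ y : Equiv.Perm (Fin n), kStar n k x y * v y = lam * v x

lemma isEig_single (w : Fin n → ℝ) (i0 : Fin n) (lam : ℝ)
    (h : ∀ j, 1 / (n : ℝ) * w j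
        + pc n k * ∑ p ∈ T n k, w (Equiv.swap p.1 p.2 j) = lam * w j) :
    IsEig n k (fun σ => w (σ i0)) lam := by
  intro x
  rw [sum_kernel (fun σ => w (σ i0)) x]
  have h2 : ∑ p ∈ T n k, w ((Equiv.swap p.1 p.2 * x) i0)
      = ∑ p ∈ T n k, w (Equiv.swap p.1 p.2 (x i0)) := by
    refine Finset.sum_congr rfl fun p _ => ?_
    rw [Equiv.Perm.mul_apply]
  dsimp only
  rw [h2]
  exact h (x i0)

lemma isEig_sum {ι : Type*} (s : Finset ι) (v : ι → Equiv.Perm (Fin n) → ℝ) (lam : ℝ)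
    (h : ∀ i ∈ s, IsEig n k (v i) lam) :
    IsEig n k (fun σ => ∑ i ∈ s, v i σ) lam := by
  intro x
  dsimp only
  simp_rw [Finset.mul_sum]
  rw [Finset.sum_comm, Finset.sum_congr rfl (fun i hi => h i hi x), ← Finset.mul_sum]

lemma isEig_smul (c : ℝ) (v : Equiv.Perm (Fin n) → ℝ) (lam : ℝ)
    (hv : IsEig n k v lam) : IsEig n k (fun σ => c * v σ) lam := by
  intro x
  dsimp only
  simp_rw [mul_left_comm _ c]
  rw [← Finset.mul_sum, hv x]

lemma isEig_sub (v u : Equiv.Perm (Fin n) → ℝ) (lam : ℝ)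
    (hv : IsEig n k v lam) (hu : IsEig n k u lam) :
    IsEig n k (fun σ => v σ - u σ) lam := by
  intro x
  dsimp only
  simp_rw [mul_sub]
  rw [Finset.sum_sub_distrib, hv x, hu x]

lemma isEig_pow (v : Equiv.Perm (Fin n) → ℝ) (lam : ℝ) (h : IsEig n k v lam) (t : ℕ) :
    ∀ x, ∑ y : Equiv.Perm (Fin n), (kStar n k ^ t) x y * v y = lam ^ t * v x := by
  induction t with
  | zero => intro x; simp [Matrix.one_apply]
  | succ t ih =>
    intro x
    rw [pow_succ']
    calc ∑ y : Equiv.Perm (Fin n), (kStar n k * kStar n k ^ t) x y * v y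
        = ∑ y : Equiv.Perm (Fin n),
            (∑ z : Equiv.Perm (Fin n), kStar n k x z * (kStar n k ^ t) z y) * v y := by
          simp_rw [Matrix.mul_apply]
      _ = ∑ z : Equiv.Perm (Fin n),
            kStar n k x z * ∑ y : Equiv.Perm (Fin n), (kStar n k ^ t) z y * v y := by
          simp_rw [Finset.sum_mul, Finset.mul_sum, mul_assoc]
          exact Finset.sum_comm
      _ = ∑ z : Equiv.Perm (Fin n), kStar n k x z * (lam ^ t * v z) := by
          simp_rw [ih]
      _ = lam ^ t * ∑ z : Equiv.Perm (Fin n), kStar n k x z * v z := by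
          rw [Finset.mul_sum]
          exact Finset.sum_congr rfl fun z _ => by ring
      _ = lam ^ (t + 1) * v x := by rw [h x]; ring

def topF (n k : ℕ) : Finset (Fin n) := Finset.univ.filter fun i => n - k ≤ (i : ℕ)
def botF (n k : ℕ) : Finset (Fin n) := Finset.univ.filter fun i => ¬ n - k ≤ (i : ℕ)

noncomputable def v1 (n k : ℕ) : Equiv.Perm (Fin n) → ℝ :=
  fun σ => (∑ i ∈ topF n k, wf n i (σ i))
    - 1 / ((n : ℝ) - (k : ℝ)) * ∑ i ∈ botF n k, wg n k (σ i)

noncomputable def v2 (n k : ℕ) : Equiv.Perm (Fin n) → ℝ :=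
  fun σ => ∑ i ∈ botF n k, (wf n i (σ i) + 1 / ((n : ℝ) - (k : ℝ)) * wg n k (σ i))

lemma isEig_v1 (hn : 2 ≤ n) (hk1 : 1 ≤ k) (hkn : k ≤ n) :
    IsEig n k (v1 n k) (lam1 n k) := by
  have hA : IsEig n k (fun σ => ∑ i ∈ topF n k, wf n i (σ i)) (lam1 n k) :=
    isEig_sum _ _ _ fun i hi =>
      isEig_single (wf n i) i _ (eig_f_top hn hk1 hkn
        (by simpa [topF] using hi))
  have hB : IsEig n k (fun σ => ∑ i ∈ botF n k, wg n k (σ i)) (lam1 n k) :=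
    isEig_sum _ _ _ fun i _ =>
      isEig_single (wg n k) i _ (eig_g hn hk1 hkn)
  exact isEig_sub _ _ _ hA (isEig_smul _ _ _ hB)

lemma isEig_v2 (hn : 2 ≤ n) (hk1 : 1 ≤ k) (hkn : k ≤ n) :
    IsEig n k (v2 n k) (lam2 n k) := by
  refine isEig_sum _ _ _ fun i hi => ?_
  exact isEig_single (fun m => wf n i m + 1 / ((n : ℝ) - (k : ℝ)) * wg n k m) i _
    (eig_F hn hk1 hkn (by simpa [botF] using hi))

lemma decomp (hn : 2 ≤ n) (σ : Equiv.Perm (Fin n)) :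
    ((Finset.univ.filter fun i => σ i = i).card : ℝ) - 1 = v1 n k σ + v2 n k σ := by
  have hN : (n : ℝ) ≠ 0 := by
    have : (0:ℝ) < n := by exact_mod_cast lt_of_lt_of_le two_pos hn
    linarith
  have h1 : v1 n k σ + v2 n k σ
      = (∑ i ∈ topF n k, wf n i (σ i)) + ∑ i ∈ botF n k, wf n i (σ i) := by
    rw [v1, v2, Finset.sum_add_distrib, ← Finset.mul_sum]
    ring
  rw [h1]
  have h2 : (∑ i ∈ topF n k, wf n i (σ i)) + ∑ i ∈ botF n k, wf n i (σ i)
      = ∑ i : Fin n, wf n i (σ i) := by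
    rw [topF, botF]
    exact Finset.sum_filter_add_sum_filter_not _ _ _
  rw [h2]
  simp only [wf, Finset.sum_sub_distrib, Finset.sum_boole, Finset.sum_const,
    Finset.card_univ, Fintype.card_fin, nsmul_eq_mul]
  rw [mul_one_div, div_self hN]

lemma card_topF (hkn : k ≤ n) : (topF n k).card = k := card_top hkn

lemma card_botF (hkn : k ≤ n) : (botF n k).card = n - k := by
  have h := Finset.card_filter_add_card_filter_not
    (s := (Finset.univ : Finset (Fin n))) (p := fun i : Fin n => n - k ≤ (i : ℕ))
  rw [card_top hkn] at h
  have h2 : (Finset.univ : Finset (Fin n)).card = n := by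
    rw [Finset.card_univ, Fintype.card_fin]
  rw [h2] at h
  rw [botF]
  omega

lemma v1_one (hkn : k ≤ n) :
    v1 n k 1 = (k : ℝ) * (1 - 1 / (n : ℝ))
      - 1 / ((n : ℝ) - (k : ℝ)) * (((n - k : ℕ) : ℝ) * (0 - (k : ℝ) / (n : ℝ))) := by
  rw [v1]
  have h1 : ∑ i ∈ topF n k, wf n i ((1 : Equiv.Perm (Fin n)) i)
      = (k : ℝ) * (1 - 1 / (n : ℝ)) := by
    rw [Finset.sum_congr rfl (fun i _ => ?_), Finset.sum_const, card_topF hkn,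
      nsmul_eq_mul]
    rw [Equiv.Perm.one_apply, wf, if_pos rfl]
  have h2 : ∑ i ∈ botF n k, wg n k ((1 : Equiv.Perm (Fin n)) i)
      = ((n - k : ℕ) : ℝ) * (0 - (k : ℝ) / (n : ℝ)) := by
    rw [Finset.sum_congr rfl (fun i hi => ?_), Finset.sum_const, card_botF hkn,
      nsmul_eq_mul]
    rw [Equiv.Perm.one_apply, wg, if_neg (by simpa [botF] using hi)]
  rw [h1, h2]

lemma v2_one (hkn : k ≤ n) :
    v2 n k 1 = ((n - k : ℕ) : ℝ)
      * ((1 - 1 / (n : ℝ)) + 1 / ((n : ℝ) - (k : ℝ)) * (0 - (k : ℝ) / (n : ℝ))) := by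
  rw [v2]
  rw [Finset.sum_congr rfl (fun i hi => ?_), Finset.sum_const, card_botF hkn,
    nsmul_eq_mul]
  have hb : ¬ n - k ≤ (i : ℕ) := by simpa [botF] using hi
  rw [Equiv.Perm.one_apply, wf, wg, if_pos rfl, if_neg hb]

end assemble
end KStarProof

/-- Expected value of the character `χ_{(n-1,1)}(σ) = #fix(σ) - 1` after `t`
steps of the `k`-star transpositions chain started at the identity. -/
theorem expected_standard_character (n k t : ℕ) (hn : 2 ≤ n) (hk1 : 1 ≤ k) (hkn : k ≤ n) :
    ∑ σ : Equiv.Perm (Fin n),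
        (kStar n k ^ t) 1 σ * (((Finset.univ.filter fun i => σ i = i).card : ℝ) - 1) =
      (k : ℝ) * (1 - ((n : ℝ) - 1) / (n : ℝ) *
          ((n : ℝ) / ((k : ℝ) * ((n : ℝ) - ((k : ℝ) + 1) / 2)))) ^ t
        + ((n : ℝ) - 1 - (k : ℝ)) * (1 - ((n : ℝ) - 1) / (n : ℝ) *
          ((k : ℝ) / ((k : ℝ) * ((n : ℝ) - ((k : ℝ) + 1) / 2)))) ^ t := by
  classical
  open KStarProof in
  have step : ∑ σ : Equiv.Perm (Fin n),
      (kStar n k ^ t) 1 σ * (((Finset.univ.filter fun i => σ i = i).card : ℝ) - 1)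
      = lam1 n k ^ t * v1 n k 1 + lam2 n k ^ t * v2 n k 1 := by
    calc ∑ σ : Equiv.Perm (Fin n),
        (kStar n k ^ t) 1 σ * (((Finset.univ.filter fun i => σ i = i).card : ℝ) - 1)
        = ∑ σ : Equiv.Perm (Fin n), (kStar n k ^ t) 1 σ * (v1 n k σ + v2 n k σ) :=
          Finset.sum_congr rfl fun σ _ => by rw [decomp hn σ]
      _ = (∑ σ : Equiv.Perm (Fin n), (kStar n k ^ t) 1 σ * v1 n k σ)
          + ∑ σ : Equiv.Perm (Fin n), (kStar n k ^ t) 1 σ * v2 n k σ := by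
          simp_rw [mul_add]
          exact Finset.sum_add_distrib
      _ = lam1 n k ^ t * v1 n k 1 + lam2 n k ^ t * v2 n k 1 := by
          rw [isEig_pow _ _ (isEig_v1 hn hk1 hkn) t 1,
            isEig_pow _ _ (isEig_v2 hn hk1 hkn) t 1]
  rw [step]
  have hl1 : (1 - ((n : ℝ) - 1) / (n : ℝ) *
      ((n : ℝ) / ((k : ℝ) * ((n : ℝ) - ((k : ℝ) + 1) / 2)))) = lam1 n k := rfl
  have hl2 : (1 - ((n : ℝ) - 1) / (n : ℝ) *
      ((k : ℝ) / ((k : ℝ) * ((n : ℝ) - ((k : ℝ) + 1) / 2)))) = lam2 n k := rfl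
  rw [hl1, hl2, v1_one hkn, v2_one hkn]
  have hN : (0 : ℝ) < (n : ℝ) := by exact_mod_cast lt_of_lt_of_le two_pos hn
  rcases lt_or_eq_of_le hkn with hlt | heq
  · have hKN : (k : ℝ) < (n : ℝ) := by exact_mod_cast hlt
    have hcast : ((n - k : ℕ) : ℝ) = (n : ℝ) - (k : ℝ) := by
      rw [Nat.cast_sub hkn]
    have hNK : (n : ℝ) - (k : ℝ) ≠ 0 := by linarith
    rw [hcast]
    have e1 : (k : ℝ) * (1 - 1 / (n : ℝ))
        - 1 / ((n : ℝ) - (k : ℝ)) * (((n : ℝ) - (k : ℝ)) * (0 - (k : ℝ) / (n : ℝ)))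
        = (k : ℝ) := by
      field_simp
      ring
    have e2 : ((n : ℝ) - (k : ℝ))
        * ((1 - 1 / (n : ℝ)) + 1 / ((n : ℝ) - (k : ℝ)) * (0 - (k : ℝ) / (n : ℝ)))
        = (n : ℝ) - 1 - (k : ℝ) := by
      field_simp
      ring
    rw [e1, e2]
    ring
  · have hl : lam2 n k = lam1 n k := by subst heq; rfl
    have hcast : ((n - k : ℕ) : ℝ) = 0 := by rw [heq]; simp
    rw [hl, hcast]
    have hK : (k : ℝ) = (n : ℝ) := by rw [heq]
    have hN0 : (n : ℝ) ≠ 0 := ne_of_gt hN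
    have hval : (n : ℝ) * (1 - 1 / (n : ℝ)) = (n : ℝ) - 1 := by
      field_simp
    simp only [zero_mul, mul_zero, sub_zero, add_zero]
    rw [hK, hval]
    ring
end
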